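/- arXiv:1801.04991 — 3 statements merged into one kernel-verified Lean document; each statement's English description precedes it below -/
import Mathlib

section
/- The flip operation does not increase delay: Let (W,A,μ) be a schedule, let w ∈ W_2 have children h and x, and let x ∈ W_2 have children y_h and y_l. Assume μ(h) = μ(x), |P ∩ W_{h*}| ≥ |P ∩ W_{x*}|, and |P ∩ W_{y_h*}| ≥ |P ∩ W_{y_l*}|. Define A' := (A ∖ {(w,h),(x,y_l)}) ∪ {(w,y_l),(x,h)}. Then (W,A',μ) is a schedule and delay(W,A',μ) ≤ delay(W,A,μ). -/
/-- A vehicle-routing instance: a finite set `P` of items, a root `r ∉ P`,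
a placement `μ₀` of root and items in a metric space `M`, a delivery time
`δ ≥ 1`, and a deadline `Δ > 0`. -/
structure VRInstance (α M : Type*) [MetricSpace M] where
  P : Finset α
  r : α
  r_not_item : r ∉ P
  P_nonempty : P.Nonempty
  μ₀ : α → M
  δ : ℝ
  one_le_δ : 1 ≤ δ
  Δ : ℝ
  Δ_pos : 0 < Δ

variable {α M : Type*} [MetricSpace M]

/-- A schedule: a finite arborescence `(W, A)` rooted at `I.r` with
`{r} ∪ P ⊆ W`, out-degree at most 2 everywhere, out-degree at most 1 on items,
together with a placement `μ : W → M` extending `μ₀` on `{r} ∪ P`. -/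
structure Schedule {α M : Type*} [MetricSpace M] (I : VRInstance α M) where
  W : Set α
  A : Set (α × α)
  μ : α → M
  finite_W : W.Finite
  root_mem : I.r ∈ W
  items_subset : ↑I.P ⊆ W
  arcs_subset : ∀ a ∈ A, a.1 ∈ W ∧ a.2 ∈ W
  no_arc_into_root : ∀ u, (u, I.r) ∉ A
  unique_in_arc : ∀ v ∈ W, v ≠ I.r → ∃! u, (u, v) ∈ A
  reachable : ∀ v ∈ W, Relation.ReflTransGen (fun u w => (u, w) ∈ A) I.r v
  outdeg_le_two : ∀ v ∈ W, {x | (v, x) ∈ A}.ncard ≤ 2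
  items_outdeg_le_one : ∀ p ∈ I.P, {x | (p, x) ∈ A}.ncard ≤ 1
  μ_placement : ∀ v ∈ insert I.r (↑I.P : Set α), μ v = I.μ₀ v

namespace Schedule

variable {I : VRInstance α M} (S : Schedule I)

/-- Reachability along arcs of the schedule. -/
def reach (u v : α) : Prop := Relation.ReflTransGen (fun a b => (a, b) ∈ S.A) u v

/-- `W_{x*}`: the vertex set of the maximal subarborescence rooted at `x`. -/
def desc (x : α) : Set α := {y ∈ S.W | S.reach x y}

/-- `W_{ry}`: the vertex set of the directed `r`–`y` path. -/
def pathSet (y : α) : Set α := {u ∈ S.W | S.reach I.r u ∧ S.reach u y}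

/-- The arcs on the directed `r`–`y` path. -/
def pathArcs (y : α) : Set (α × α) :=
  {a ∈ S.A | a.1 ∈ S.pathSet y ∧ a.2 ∈ S.pathSet y}

/-- Out-degree of a vertex. -/
noncomputable def outDeg (v : α) : ℕ := {x | (v, x) ∈ S.A}.ncard

/-- The handover delay at a bifurcation node `w`:
`min_{x child of w} |P ∩ W_{x*}|`. -/
noncomputable def handover (w : α) : ℕ :=
  sInf {k : ℕ | ∃ x, (w, x) ∈ S.A ∧ k = ((↑I.P : Set α) ∩ S.desc x).ncard}

/-- The delay of vertex `y`: travel time along the `r`–`y` path, plus delivery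
time `δ` for each item on the path, plus handover delays at bifurcation nodes
on the path. -/
noncomputable def delayTo (y : α) : ℝ :=
  (∑ᶠ a ∈ S.pathArcs y, dist (S.μ a.1) (S.μ a.2))
    + I.δ * ((↑I.P : Set α) ∩ S.pathSet y).ncard
    + ∑ᶠ w ∈ {u ∈ S.pathSet y | S.outDeg u = 2}, (S.handover w : ℝ)

/-- The delay of the schedule: the maximum delay of an item. -/
noncomputable def delay : ℝ := I.P.sup' I.P_nonempty fun p => S.delayTo p

/-- A schedule is feasible if its delay is at most the deadline. -/
def Feasible : Prop := S.delay ≤ I.Δ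

/-- The length (travel cost) of the schedule. -/
noncomputable def length : ℝ := ∑ᶠ a ∈ S.A, dist (S.μ a.1) (S.μ a.2)

/-- The leaves of the schedule (one vehicle per leaf). -/
def leaves : Set α := {v ∈ S.W | S.outDeg v = 0}

/-- The cost of the schedule for setup cost `σ`: length plus `σ` per vehicle. -/
noncomputable def cost (σ : ℝ) : ℝ := S.length + σ * S.leaves.ncard

end Schedule

/-- The minimum length of a tree with vertex set `{r} ∪ P`,
with edges weighted by the metric distance. -/
noncomputable def mstLength [DecidableEq α] (I : VRInstance α M) : ℝ :=
  sInf {x : ℝ | ∃ T : SimpleGraph ↥(insert I.r I.P), T.IsTree ∧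
    x = ∑ᶠ e ∈ T.edgeSet,
      (Sym2.lift ⟨fun u v => dist (I.μ₀ u) (I.μ₀ v), fun u v => dist_comm _ _⟩ : Sym2 ↥(insert I.r I.P) → ℝ) e}


/-! ### Auxiliary machinery -/

section Aux

def chainLen (r : α → α → Prop) : ℕ → α → α → Prop
  | 0, a, b => a = b
  | n+1, a, b => ∃ c, r a c ∧ chainLen r n c b

lemma chainLen_snoc {r : α → α → Prop} :
    ∀ {n : ℕ} {a b c : α}, chainLen r n a b → r b c → chainLen r (n+1) a c := by
  intro n
  induction n with
  | zero => intro a b c hab hbc; exact ⟨c, by rwa [show a = b from hab], rfl⟩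
  | succ n ih =>
      rintro a b c ⟨d, had, hd⟩ hbc
      exact ⟨d, had, ih hd hbc⟩

lemma chainLen_cases_tail {r : α → α → Prop} :
    ∀ {n : ℕ} {a b : α}, chainLen r (n+1) a b → ∃ c, chainLen r n a c ∧ r c b := by
  intro n
  induction n with
  | zero => rintro a b ⟨c, hac, hcb⟩; exact ⟨a, rfl, by rwa [show c = b from hcb] at hac⟩
  | succ n ih =>
      rintro a b ⟨c, hac, hcb⟩
      obtain ⟨d, hd, hdb⟩ := ih hcb
      exact ⟨d, ⟨c, hac, hd⟩, hdb⟩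

lemma reflTransGen_chainLen {r : α → α → Prop} {a b : α}
    (h : Relation.ReflTransGen r a b) : ∃ n, chainLen r n a b := by
  induction h with
  | refl => exact ⟨0, rfl⟩
  | tail _ hbc ih => obtain ⟨n, hn⟩ := ih; exact ⟨n+1, chainLen_snoc hn hbc⟩

end Aux

namespace Schedule

variable {I : VRInstance α M} (T : Schedule I)

lemma arc_fst_mem {u v : α} (h : (u, v) ∈ T.A) : u ∈ T.W := (T.arcs_subset _ h).1

lemma arc_snd_mem {u v : α} (h : (u, v) ∈ T.A) : v ∈ T.W := (T.arcs_subset _ h).2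

lemma finite_A : T.A.Finite := by
  apply Set.Finite.subset (T.finite_W.prod T.finite_W)
  rintro ⟨a, b⟩ hab
  exact ⟨T.arc_fst_mem hab, T.arc_snd_mem hab⟩

lemma arc_snd_ne_root {u v : α} (h : (u, v) ∈ T.A) : v ≠ I.r := by
  rintro rfl; exact T.no_arc_into_root u h

lemma parent_unique {u u' v : α} (h : (u, v) ∈ T.A) (h' : (u', v) ∈ T.A) : u = u' := by
  obtain ⟨p, _, hu⟩ := T.unique_in_arc v (T.arc_snd_mem h) (T.arc_snd_ne_root h)
  rw [hu u h, hu u' h']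

/-- Depth of a vertex: length of the shortest chain from the root. -/
noncomputable def dep (v : α) : ℕ :=
  sInf {n | chainLen (fun a b => (a, b) ∈ T.A) n I.r v}

lemma dep_spec {v : α} (hv : v ∈ T.W) :
    chainLen (fun a b => (a, b) ∈ T.A) (T.dep v) I.r v :=
  Nat.sInf_mem (reflTransGen_chainLen (T.reachable v hv))

lemma dep_le {v : α} {n : ℕ} (h : chainLen (fun a b => (a, b) ∈ T.A) n I.r v) :
    T.dep v ≤ n := Nat.sInf_le h

lemma arc_dep_lt {u v : α} (h : (u, v) ∈ T.A) : T.dep u < T.dep v := by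
  have hv := T.arc_snd_mem h
  have hspec := T.dep_spec hv
  have hne : T.dep v ≠ 0 := by
    intro h0
    rw [h0] at hspec
    exact T.arc_snd_ne_root h (show I.r = v from hspec).symm
  obtain ⟨m, hm⟩ := Nat.exists_eq_succ_of_ne_zero hne
  rw [hm] at hspec
  obtain ⟨c, hc, hcv⟩ := chainLen_cases_tail hspec
  have : c = u := T.parent_unique hcv h
  subst this
  calc T.dep c ≤ m := T.dep_le hc
    _ < T.dep v := by omega

lemma reach_dep_le {u v : α} (h : T.reach u v) : T.dep u ≤ T.dep v := by
  induction h with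
  | refl => exact le_refl _
  | tail _ hbc ih => exact ih.trans (T.arc_dep_lt hbc).le

lemma reach_dep_lt {u v : α} (h : T.reach u v) (hne : u ≠ v) : T.dep u < T.dep v := by
  rcases h.cases_head with rfl | ⟨c, huc, hcv⟩
  · exact absurd rfl hne
  · exact (T.arc_dep_lt huc).trans_le (T.reach_dep_le hcv)

lemma reach_antisymm {u v : α} (h : T.reach u v) (h' : T.reach v u) : u = v := by
  by_contra hne
  exact absurd (T.reach_dep_lt h hne) (not_lt.mpr (T.reach_dep_le h'))

lemma reach_to_parent {u v z : α} (harc : (u, v) ∈ T.A) (h : T.reach z v) :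
    z = v ∨ T.reach z u := by
  rcases Relation.ReflTransGen.cases_tail h with h1 | ⟨c, hzc, hcv⟩
  · exact Or.inl h1.symm
  · exact Or.inr (by rwa [T.parent_unique hcv harc] at hzc)

lemma reach_comparable {a b c : α} (hac : T.reach a c) (hbc : T.reach b c) :
    T.reach a b ∨ T.reach b a := by
  induction hac using Relation.ReflTransGen.head_induction_on with
  | refl => exact Or.inr hbc
  | head had hdc ih =>
      rename_i a' d
      rcases ih with h | h
      · exact Or.inl (Relation.ReflTransGen.head had h)
      · rcases T.reach_to_parent had h with rfl | h'
        · exact Or.inl (Relation.ReflTransGen.single had)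
        · exact Or.inr h'

lemma mem_desc_self {v : α} (hv : v ∈ T.W) : v ∈ T.desc v :=
  ⟨hv, Relation.ReflTransGen.refl⟩

lemma desc_subset_W {v : α} : T.desc v ⊆ T.W := fun _ h => h.1

lemma finite_desc (v : α) : (T.desc v).Finite := T.finite_W.subset T.desc_subset_W

lemma desc_trans {u v z : α} (h : T.reach u v) (hz : z ∈ T.desc v) : z ∈ T.desc u :=
  ⟨hz.1, h.trans hz.2⟩

lemma desc_child_decomp {v z : α} (hz : z ∈ T.desc v) :
    z = v ∨ ∃ c, (v, c) ∈ T.A ∧ z ∈ T.desc c := by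
  rcases hz.2.cases_head with rfl | ⟨c, hvc, hcz⟩
  · exact Or.inl rfl
  · exact Or.inr ⟨c, hvc, hz.1, hcz⟩

lemma children_eq_pair {v a b : α} (h1 : (v, a) ∈ T.A) (h2 : (v, b) ∈ T.A)
    (hab : a ≠ b) : {c | (v, c) ∈ T.A} = {a, b} := by
  have hfin : {c | (v, c) ∈ T.A}.Finite :=
    T.finite_W.subset (fun c hc => T.arc_snd_mem hc)
  have hsub : ({a, b} : Set α) ⊆ {c | (v, c) ∈ T.A} := by
    rintro c (rfl | rfl) <;> assumption
  have := Set.eq_of_subset_of_ncard_le hsub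
    (by rw [Set.ncard_pair hab]; exact T.outdeg_le_two v (T.arc_fst_mem h1)) hfin
  exact this.symm

lemma desc_disjoint {v c1 c2 : α} (h1 : (v, c1) ∈ T.A) (h2 : (v, c2) ∈ T.A)
    (hne : c1 ≠ c2) {z : α} (hz1 : z ∈ T.desc c1) (hz2 : z ∈ T.desc c2) : False := by
  have hcomp := T.reach_comparable hz1.2 hz2.2
  rcases hcomp with h | h
  · rcases T.reach_to_parent h2 h with rfl | h'
    · exact hne rfl
    · exact absurd (T.arc_dep_lt h1) (not_lt.mpr (T.reach_dep_le h'))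
  · rcases T.reach_to_parent h1 h with rfl | h'
    · exact hne rfl
    · exact absurd (T.arc_dep_lt h2) (not_lt.mpr (T.reach_dep_le h'))

lemma sInf_pair_nat (a b : ℕ) : sInf {a, b} = min a b := by
  apply le_antisymm
  · rcases min_cases a b with ⟨h, _⟩ | ⟨h, _⟩
    · rw [h]; exact Nat.sInf_le (by simp)
    · rw [h]; exact Nat.sInf_le (by simp)
  · apply le_csInf ⟨a, by simp⟩
    rintro k (rfl | rfl)
    · exact min_le_left _ _
    · exact min_le_right _ _

lemma handover_pair {v a b : α} (h1 : (v, a) ∈ T.A) (h2 : (v, b) ∈ T.A) (hab : a ≠ b) :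
    T.handover v = min ((↑I.P : Set α) ∩ T.desc a).ncard ((↑I.P : Set α) ∩ T.desc b).ncard := by
  have hch := T.children_eq_pair h1 h2 hab
  have : {k : ℕ | ∃ x, (v, x) ∈ T.A ∧ k = ((↑I.P : Set α) ∩ T.desc x).ncard}
      = {((↑I.P : Set α) ∩ T.desc a).ncard, ((↑I.P : Set α) ∩ T.desc b).ncard} := by
    ext k
    constructor
    · rintro ⟨c, hc, rfl⟩
      have : c ∈ ({a, b} : Set α) := hch ▸ hc
      rcases this with rfl | rfl
      · exact Or.inl rfl
      · exact Or.inr rfl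
    · rintro (rfl | rfl)
      · exact ⟨a, h1, rfl⟩
      · exact ⟨b, h2, rfl⟩
  rw [handover, this, sInf_pair_nat]

end Schedule


lemma finsum_mem_insert'' {β : Type*} {s : Set β} {f : β → ℝ} {b : β}
    (hb : b ∉ s) (hs : s.Finite) : ∑ᶠ i ∈ insert b s, f i = f b + ∑ᶠ i ∈ s, f i := by
  rw [show insert b s = {b} ∪ s from rfl,
    finsum_mem_union (Set.disjoint_singleton_left.mpr hb) (Set.finite_singleton b) hs,
    finsum_mem_singleton]

namespace Schedule

variable {I : VRInstance α M} (T : Schedule I)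

/-- The segment of the path from `v` to `p`, excluding `v`. -/
def seg (v p : α) : Set α := {u ∈ T.W | T.reach v u ∧ T.reach u p ∧ u ≠ v}

/-- The arcs of the path from `v` to `p`. -/
def segArcs (v p : α) : Set (α × α) :=
  {a ∈ T.A | a.1 ∈ insert v (T.seg v p) ∧ a.2 ∈ T.seg v p}

lemma finite_pathSet (p : α) : (T.pathSet p).Finite := T.finite_W.subset (fun _ h => h.1)

lemma finite_seg (v p : α) : (T.seg v p).Finite := T.finite_W.subset (fun _ h => h.1)

lemma finite_pathArcs (p : α) : (T.pathArcs p).Finite := T.finite_A.subset (fun _ h => h.1)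

lemma finite_segArcs (v p : α) : (T.segArcs v p).Finite := T.finite_A.subset (fun _ h => h.1)

lemma pathSet_subset_pathSet {v p : α} (hvp : T.reach v p) :
    T.pathSet v ⊆ T.pathSet p := fun u hu => ⟨hu.1, hu.2.1, hu.2.2.trans hvp⟩

lemma seg_subset_pathSet {v p : α} (hrv : T.reach I.r v) :
    T.seg v p ⊆ T.pathSet p := fun u hu => ⟨hu.1, hrv.trans hu.2.1, hu.2.2.1⟩

lemma pathSet_seg_disjoint (v p : α) : Disjoint (T.pathSet v) (T.seg v p) := by
  rw [Set.disjoint_left]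
  rintro u ⟨_, _, huv⟩ ⟨_, hvu, _, hne⟩
  exact hne (T.reach_antisymm hvu huv).symm

lemma pathSet_decomp {v p : α} (hv : v ∈ T.W) (hrv : T.reach I.r v) (hvp : T.reach v p) :
    T.pathSet p = T.pathSet v ∪ T.seg v p := by
  ext u
  constructor
  · rintro ⟨huW, hru, hup⟩
    rcases T.reach_comparable hup hvp with huv | hvu
    · exact Or.inl ⟨huW, hru, huv⟩
    · by_cases hne : u = v
      · exact Or.inl ⟨huW, hru, hne ▸ Relation.ReflTransGen.refl⟩

      · exact Or.inr ⟨huW, hvu, hup, hne⟩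
  · rintro (hu | hu)
    · exact T.pathSet_subset_pathSet hvp hu
    · exact T.seg_subset_pathSet hrv hu

lemma pathArcs_segArcs_disjoint (v p : α) : Disjoint (T.pathArcs v) (T.segArcs v p) := by
  rw [Set.disjoint_left]
  rintro ⟨a1, a2⟩ ⟨_, _, _, _, ha2⟩ ⟨_, _, _, hvu, _, hne⟩
  exact hne (T.reach_antisymm hvu ha2).symm

lemma pathArcs_decomp {v p : α} (hv : v ∈ T.W) (hrv : T.reach I.r v) (hvp : T.reach v p) :
    T.pathArcs p = T.pathArcs v ∪ T.segArcs v p := by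
  ext ⟨a1, a2⟩
  constructor
  · rintro ⟨hA, h1, h2⟩
    have h2' : a2 ∈ T.pathSet v ∪ T.seg v p := (T.pathSet_decomp hv hrv hvp) ▸ h2
    rcases h2' with h2' | h2'
    · exact Or.inl ⟨hA, ⟨h1.1, h1.2.1,
        (Relation.ReflTransGen.single hA).trans h2'.2.2⟩, h2'⟩
    · refine Or.inr ⟨hA, ?_, h2'⟩
      rcases T.reach_to_parent hA h2'.2.1 with h | h
      · exact absurd h.symm h2'.2.2.2
      · by_cases hne : a1 = v
        · exact Or.inl hne
        · exact Or.inr ⟨h1.1, h, h1.2.2, hne⟩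
  · rintro (⟨hA, h1, h2⟩ | ⟨hA, h1, h2⟩)
    · exact ⟨hA, T.pathSet_subset_pathSet hvp h1, T.pathSet_subset_pathSet hvp h2⟩
    · refine ⟨hA, ?_, T.seg_subset_pathSet hrv h2⟩
      rcases h1 with rfl | h1
      · exact ⟨hv, hrv, hvp⟩
      · exact T.seg_subset_pathSet hrv h1

lemma self_not_mem_seg (v p : α) : v ∉ T.seg v p := fun h => h.2.2.2 rfl

lemma seg_step {v c p : α} (hvc : (v, c) ∈ T.A) (hcp : T.reach c p) :
    T.seg v p = insert c (T.seg c p) := by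
  have hcv : c ≠ v := fun h =>
    absurd (T.arc_dep_lt hvc) (by rw [h]; exact lt_irrefl _)
  ext u
  constructor
  · rintro ⟨huW, hvu, hup, hne⟩
    rcases T.reach_comparable hup hcp with huc | hcu
    · rcases T.reach_to_parent hvc huc with rfl | h
      · exact Or.inl rfl
      · exact absurd (T.reach_antisymm h hvu) hne
    · by_cases h : u = c
      · exact Or.inl h
      · exact Or.inr ⟨huW, hcu, hup, h⟩
  · rintro (rfl | ⟨huW, hcu, hup, hne⟩)
    · exact ⟨T.arc_snd_mem hvc, Relation.ReflTransGen.single hvc, hcp, hcv⟩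
    · refine ⟨huW, (Relation.ReflTransGen.single hvc).trans hcu, hup, ?_⟩
      rintro rfl
      exact absurd (T.arc_dep_lt hvc)
        (not_lt.mpr (T.reach_dep_le hcu))

lemma arc_not_mem_segArcs {v c p : α} (hvc : (v, c) ∈ T.A) :
    (v, c) ∉ T.segArcs c p := fun hmem => T.self_not_mem_seg c p hmem.2.2

lemma segArcs_step {v c p : α} (hvc : (v, c) ∈ T.A) (hcp : T.reach c p) :
    T.segArcs v p = insert (v, c) (T.segArcs c p) := by
  have hseg := T.seg_step hvc hcp
  have hcv : c ≠ v := fun h =>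
    absurd (T.arc_dep_lt hvc) (by rw [h]; exact lt_irrefl _)
  ext ⟨a1, a2⟩
  constructor
  · rintro ⟨hA, h1, h2⟩
    rw [hseg] at h2
    rcases h2 with rfl | h2
    · have : a1 = v := T.parent_unique hA hvc
      exact Or.inl (by rw [this])
    · refine Or.inr ⟨hA, ?_, h2⟩
      rcases T.reach_to_parent hA h2.2.1 with h | h
      · exact absurd h.symm h2.2.2.2
      · by_cases hne : a1 = c
        · exact Or.inl hne
        · exact Or.inr ⟨T.arc_fst_mem hA, h,
            (Relation.ReflTransGen.single hA).trans h2.2.2.1, hne⟩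
  · rintro (heq | ⟨hA, h1, h2⟩)
    · rw [Prod.ext_iff] at heq
      obtain ⟨h1', h2'⟩ := heq
      subst h1'; subst h2'
      exact ⟨hvc, Or.inl rfl, by rw [hseg]; exact Or.inl rfl⟩
    · refine ⟨hA, ?_, by rw [hseg]; exact Or.inr h2⟩
      rcases h1 with rfl | h1
      · exact Or.inr (by rw [hseg]; exact Or.inl rfl)
      · exact Or.inr (by rw [hseg]; exact Or.inr h1)

lemma seg_subset_desc {v p : α} : T.seg v p ⊆ T.desc v := fun u hu => ⟨hu.1, hu.2.1⟩

end Schedule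


/-- The arc set after the flip operation. -/
def flipSet (A : Set (α × α)) (w x h yl : α) : Set (α × α) :=
  (A \ {(w, h), (x, yl)}) ∪ {(w, yl), (x, h)}

lemma mem_flipSet {A : Set (α × α)} {w x h yl : α} {a : α × α} :
    a ∈ flipSet A w x h yl ↔
      (a ∈ A ∧ a ≠ (w, h) ∧ a ≠ (x, yl)) ∨ a = (w, yl) ∨ a = (x, h) := by
  simp only [flipSet, Set.mem_union, Set.mem_diff, Set.mem_insert_iff,
    Set.mem_singleton_iff, not_or]

lemma flipSet_flipSet {A : Set (α × α)} {w x h yl : α}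
    (h1 : (w, h) ∈ A) (h2 : (x, yl) ∈ A) (h3 : (w, yl) ∉ A) (h4 : (x, h) ∉ A)
    (h5 : (w, h) ≠ (x, yl)) (h6 : (w, yl) ≠ (x, h)) :
    flipSet (flipSet A w x h yl) w x yl h = A := by
  ext a
  simp only [mem_flipSet]
  constructor
  · rintro (⟨(⟨ha, _, _⟩ | (rfl | rfl)), hn1, hn2⟩ | (rfl | rfl))
    · exact ha
    · exact absurd rfl hn1
    · exact absurd rfl hn2
    · exact h1
    · exact h2
  · intro ha
    by_cases e1 : a = (w, h)
    · exact Or.inr (Or.inl e1)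
    by_cases e2 : a = (x, yl)
    · exact Or.inr (Or.inr e2)
    · refine Or.inl ⟨Or.inl ⟨ha, e1, e2⟩, ?_, ?_⟩
      · rintro rfl; exact h3 ha
      · rintro rfl; exact h4 ha

namespace Schedule

variable {I : VRInstance α M} (T : Schedule I)

lemma not_reach_of_arc {u v : α} (h : (u, v) ∈ T.A) : ¬ T.reach v u :=
  fun hr => absurd (T.arc_dep_lt h) (not_lt.mpr (T.reach_dep_le hr))

lemma arc_ne {u v : α} (h : (u, v) ∈ T.A) : u ≠ v :=
  fun e => absurd (T.arc_dep_lt h) (e ▸ lt_irrefl _)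

lemma reach_arc {u v : α} (h : (u, v) ∈ T.A) : T.reach u v :=
  Relation.ReflTransGen.single h

lemma sibling_not_reach {v c1 c2 : α} (h1 : (v, c1) ∈ T.A) (h2 : (v, c2) ∈ T.A)
    (hne : c1 ≠ c2) : ¬ T.reach c1 c2 := by
  intro hr
  rcases T.reach_to_parent h2 hr with rfl | hr'
  · exact hne rfl
  · exact T.not_reach_of_arc h1 hr'

section FlipReach

variable {w x h yl : α}

/-- Reachability in the flipped arc set. -/
def freach (T : Schedule I) (w x h yl : α) : α → α → Prop :=
  Relation.ReflTransGen (fun a b => (a, b) ∈ flipSet T.A w x h yl)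

lemma freach_arc {a b : α} (hab : (a, b) ∈ flipSet T.A w x h yl) :
    T.freach w x h yl a b := Relation.ReflTransGen.single hab

lemma freach_w (hwh : (w, h) ∈ T.A) (hwx : (w, x) ∈ T.A) (hxyl : (x, yl) ∈ T.A)
    {a : α} (hr : T.reach a w) : T.freach w x h yl a w := by
  induction hr using Relation.ReflTransGen.head_induction_on with
  | refl => exact Relation.ReflTransGen.refl
  | head hbc hcw ih =>
      refine Relation.ReflTransGen.head ?_ ih
      rw [mem_flipSet]
      refine Or.inl ⟨hbc, ?_, ?_⟩
      · rintro heq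
        rw [Prod.ext_iff] at heq
        obtain ⟨rfl, rfl⟩ := heq
        exact T.not_reach_of_arc hwh hcw
      · rintro heq
        rw [Prod.ext_iff] at heq
        obtain ⟨rfl, rfl⟩ := heq
        exact absurd (T.reach_dep_le hcw)
          (not_le.mpr ((T.arc_dep_lt hwx).trans (T.arc_dep_lt hxyl)))

lemma freach_of_not_reach_w (hwx : (w, x) ∈ T.A) {z : α} (hz : ¬ T.reach w z)
    {a : α} (hr : T.reach a z) : T.freach w x h yl a z := by
  induction hr using Relation.ReflTransGen.head_induction_on with
  | refl => exact Relation.ReflTransGen.refl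
  | head hbc hcz ih =>
      refine Relation.ReflTransGen.head ?_ ih
      rw [mem_flipSet]
      refine Or.inl ⟨hbc, ?_, ?_⟩
      · rintro heq
        rw [Prod.ext_iff] at heq
        obtain ⟨rfl, rfl⟩ := heq
        exact hz ((Relation.ReflTransGen.single hbc).trans hcz)
      · rintro heq
        rw [Prod.ext_iff] at heq
        obtain ⟨rfl, rfl⟩ := heq
        exact hz (((Relation.ReflTransGen.single hbc).trans hcz).head hwx)

lemma freach_of_not_reach (hwx : (w, x) ∈ T.A) {a z : α}
    (haw : ¬ T.reach a w) (hax : ¬ T.reach a x) (hr : T.reach a z) :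
    T.freach w x h yl a z := by
  have key : ∀ b, T.reach b z → ¬ T.reach b w → ¬ T.reach b x → T.freach w x h yl b z := by
    intro b hb
    induction hb using Relation.ReflTransGen.head_induction_on with
    | refl => intro _ _; exact Relation.ReflTransGen.refl
    | head hbc hcz ih =>
        rename_i b c
        intro hbw hbx
        have hcw : ¬ T.reach c w := fun hr' => hbw ((Relation.ReflTransGen.single hbc).trans hr')
        have hcx : ¬ T.reach c x := fun hr' => hbx ((Relation.ReflTransGen.single hbc).trans hr')
        refine Relation.ReflTransGen.head ?_ (ih hcw hcx)
        rw [mem_flipSet]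
        refine Or.inl ⟨hbc, ?_, ?_⟩
        · rintro heq
          rw [Prod.ext_iff] at heq
          obtain ⟨rfl, rfl⟩ := heq
          exact hbw Relation.ReflTransGen.refl
        · rintro heq
          rw [Prod.ext_iff] at heq
          obtain ⟨rfl, rfl⟩ := heq
          exact hbx Relation.ReflTransGen.refl
  exact key a hr haw hax

variable {yh : α}

lemma wx_mem_flipSet (hwx : (w, x) ∈ T.A) (hhx : h ≠ x) :
    (w, x) ∈ flipSet T.A w x h yl := by
  rw [mem_flipSet]
  refine Or.inl ⟨hwx, ?_, ?_⟩
  · rintro heq; rw [Prod.ext_iff] at heq; exact hhx heq.2.symm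
  · rintro heq; rw [Prod.ext_iff] at heq; exact T.arc_ne hwx heq.1

lemma xyh_mem_flipSet (hwx : (w, x) ∈ T.A) (hxyh : (x, yh) ∈ T.A) (hyy : yh ≠ yl) :
    (x, yh) ∈ flipSet T.A w x h yl := by
  rw [mem_flipSet]
  refine Or.inl ⟨hxyh, ?_, ?_⟩
  · rintro heq; rw [Prod.ext_iff] at heq; exact T.arc_ne hwx heq.1.symm
  · rintro heq; rw [Prod.ext_iff] at heq; exact hyy heq.2

lemma freach_desc_w (hwh : (w, h) ∈ T.A) (hwx : (w, x) ∈ T.A)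
    (hxyh : (x, yh) ∈ T.A) (hxyl : (x, yl) ∈ T.A) (hhx : h ≠ x) (hyy : yh ≠ yl)
    {z : α} (hz : z ∈ T.desc w) : T.freach w x h yl w z := by
  have hwyl : (w, yl) ∈ flipSet T.A w x h yl := mem_flipSet.mpr (Or.inr (Or.inl rfl))
  have hxh : (x, h) ∈ flipSet T.A w x h yl := mem_flipSet.mpr (Or.inr (Or.inr rfl))
  have hwx' := T.wx_mem_flipSet (yl := yl) hwx hhx
  have hxyh' := T.xyh_mem_flipSet (h := h) (yl := yl) hwx hxyh hyy
  rcases T.desc_child_decomp hz with rfl | ⟨c, hc, hzc⟩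
  · exact Relation.ReflTransGen.refl
  have hch : c ∈ ({h, x} : Set α) := (T.children_eq_pair hwh hwx hhx) ▸ hc
  rcases hch with hc1 | hc1
  · -- c = h : z in subtree of h
    rw [hc1] at hzc
    have hfh : T.freach w x h yl w h :=
      Relation.ReflTransGen.tail (T.freach_arc hwx') hxh
    refine hfh.trans (T.freach_of_not_reach hwx ?_ ?_ hzc.2)
    · exact fun hr => T.not_reach_of_arc hwh hr
    · exact T.sibling_not_reach hwh hwx hhx
  · -- c = x : z in subtree of x
    rw [hc1] at hzc
    rcases T.desc_child_decomp hzc with rfl | ⟨d, hd, hzd⟩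
    · exact T.freach_arc hwx'
    have hdch : d ∈ ({yh, yl} : Set α) := (T.children_eq_pair hxyh hxyl hyy) ▸ hd
    rcases hdch with hd1 | hd1
    · rw [hd1] at hzd
      refine Relation.ReflTransGen.trans
        (Relation.ReflTransGen.tail (T.freach_arc hwx') hxyh')
        (T.freach_of_not_reach hwx ?_ ?_ hzd.2)
      · exact fun hr => absurd ((T.arc_dep_lt hwx).trans (T.arc_dep_lt hxyh))
          (not_lt.mpr (T.reach_dep_le hr))
      · exact fun hr => T.not_reach_of_arc hxyh hr
    · rw [hd1] at hzd
      refine Relation.ReflTransGen.trans (T.freach_arc hwyl)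
        (T.freach_of_not_reach hwx ?_ ?_ hzd.2)
      · exact fun hr => absurd ((T.arc_dep_lt hwx).trans (T.arc_dep_lt hxyl))
          (not_lt.mpr (T.reach_dep_le hr))
      · exact fun hr => T.not_reach_of_arc hxyl hr

lemma freach_desc (hwh : (w, h) ∈ T.A) (hwx : (w, x) ∈ T.A)
    (hxyh : (x, yh) ∈ T.A) (hxyl : (x, yl) ∈ T.A) (hhx : h ≠ x) (hyy : yh ≠ yl)
    {c : α} (hcx : c ≠ x) {z : α} (hz : z ∈ T.desc c) : T.freach w x h yl c z := by
  by_cases hcw : T.reach c w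
  · by_cases hwz : T.reach w z
    · exact (T.freach_w hwh hwx hxyl hcw).trans
        (T.freach_desc_w hwh hwx hxyh hxyl hhx hyy ⟨hz.1, hwz⟩)
    · exact T.freach_of_not_reach_w hwx hwz hz.2
  · have hcx' : ¬ T.reach c x := by
      intro hcx'
      rcases T.reach_comparable hcx' (Relation.ReflTransGen.single hwx) with hh | hh
      · exact hcw hh
      · rcases T.reach_to_parent hwx hcx' with rfl | hh'
        · exact hcx rfl
        · exact hcw hh'
    exact T.freach_of_not_reach hwx hcw hcx' hz.2

end FlipReach

end Schedule


namespace Schedule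

variable {I : VRInstance α M} (T : Schedule I)

lemma delayTo_decomp {v p : α} (hv : v ∈ T.W) (hrv : T.reach I.r v) (hvp : T.reach v p) :
    T.delayTo p = T.delayTo v +
      ((∑ᶠ a ∈ T.segArcs v p, dist (T.μ a.1) (T.μ a.2))
        + I.δ * ((↑I.P : Set α) ∩ T.seg v p).ncard
        + ∑ᶠ u ∈ {u ∈ T.seg v p | T.outDeg u = 2}, (T.handover u : ℝ)) := by
  have hps := T.pathSet_decomp hv hrv hvp
  have hpa := T.pathArcs_decomp hv hrv hvp
  have e1 : (∑ᶠ a ∈ T.pathArcs p, dist (T.μ a.1) (T.μ a.2))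
      = (∑ᶠ a ∈ T.pathArcs v, dist (T.μ a.1) (T.μ a.2))
        + ∑ᶠ a ∈ T.segArcs v p, dist (T.μ a.1) (T.μ a.2) := by
    rw [hpa, finsum_mem_union (T.pathArcs_segArcs_disjoint v p)
      (T.finite_pathArcs v) (T.finite_segArcs v p)]
  have e2 : (((↑I.P : Set α) ∩ T.pathSet p).ncard : ℝ)
      = ((↑I.P : Set α) ∩ T.pathSet v).ncard + ((↑I.P : Set α) ∩ T.seg v p).ncard := by
    rw [hps, Set.inter_union_distrib_left, Set.ncard_union_eq
      (((T.pathSet_seg_disjoint v p).mono (Set.inter_subset_right) (Set.inter_subset_right)))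
      ((T.finite_pathSet v).subset Set.inter_subset_right)
      ((T.finite_seg v p).subset Set.inter_subset_right)]
    push_cast
    ring
  have e3 : (∑ᶠ u ∈ {u ∈ T.pathSet p | T.outDeg u = 2}, (T.handover u : ℝ))
      = (∑ᶠ u ∈ {u ∈ T.pathSet v | T.outDeg u = 2}, (T.handover u : ℝ))
        + ∑ᶠ u ∈ {u ∈ T.seg v p | T.outDeg u = 2}, (T.handover u : ℝ) := by
    have : {u ∈ T.pathSet p | T.outDeg u = 2}
        = {u ∈ T.pathSet v | T.outDeg u = 2} ∪ {u ∈ T.seg v p | T.outDeg u = 2} := by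
      rw [hps]
      ext u
      simp only [Set.mem_setOf_eq, Set.mem_union]
      tauto
    rw [this, finsum_mem_union
      ((T.pathSet_seg_disjoint v p).mono (Set.sep_subset _ _) (Set.sep_subset _ _))
      ((T.finite_pathSet v).subset (Set.sep_subset _ _))
      ((T.finite_seg v p).subset (Set.sep_subset _ _))]
  rw [delayTo, delayTo, e1, e2, e3]
  ring

lemma bif_insert {c : α} (hc : T.outDeg c = 2) (Z : Set α) :
    {u ∈ insert c Z | T.outDeg u = 2} = insert c {u ∈ Z | T.outDeg u = 2} := by
  ext u
  simp only [Set.mem_setOf_eq, Set.mem_insert_iff]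
  constructor
  · rintro ⟨rfl | hu, hd⟩
    · exact Or.inl rfl
    · exact Or.inr ⟨hu, hd⟩
  · rintro (rfl | ⟨hu, hd⟩)
    · exact ⟨Or.inl rfl, hc⟩
    · exact ⟨Or.inr hu, hd⟩

end Schedule

/-- **The flip operation does not increase delay.**
Let `(W,A,μ)` be a schedule, let `w ∈ W_2` have children `h` and `x`, and let
`x ∈ W_2` have children `y_h` and `y_l`. Assume `μ(h) = μ(x)`,
`|P ∩ W_{h*}| ≥ |P ∩ W_{x*}|` and `|P ∩ W_{y_h*}| ≥ |P ∩ W_{y_l*}|`. Define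
`A' := (A ∖ {(w,h),(x,y_l)}) ∪ {(w,y_l),(x,h)}`. Then `(W,A',μ)` is a schedule
and `delay(W,A',μ) ≤ delay(W,A,μ)`. -/
theorem flip_delay (I : VRInstance α M) (S : Schedule I)
    (w h x yh yl : α) (hwW : w ∈ S.W) (hwdeg : S.outDeg w = 2)
    (hwh : (w, h) ∈ S.A) (hwx : (w, x) ∈ S.A) (hhx : h ≠ x)
    (hxdeg : S.outDeg x = 2)
    (hxyh : (x, yh) ∈ S.A) (hxyl : (x, yl) ∈ S.A) (hyy : yh ≠ yl)
    (hμ : S.μ h = S.μ x)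
    (hheavy_h : ((↑I.P : Set α) ∩ S.desc x).ncard ≤ ((↑I.P : Set α) ∩ S.desc h).ncard)
    (hheavy_y : ((↑I.P : Set α) ∩ S.desc yl).ncard ≤ ((↑I.P : Set α) ∩ S.desc yh).ncard) :
    ∃ S' : Schedule I,
      S'.W = S.W ∧
      S'.A = (S.A \ {(w, h), (x, yl)}) ∪ {(w, yl), (x, h)} ∧
      S'.μ = S.μ ∧
      S'.delay ≤ S.delay := by
  classical
  have hxW : x ∈ S.W := S.arc_snd_mem hwx
  have hhW : h ∈ S.W := S.arc_snd_mem hwh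
  have hyhW : yh ∈ S.W := S.arc_snd_mem hxyh
  have hylW : yl ∈ S.W := S.arc_snd_mem hxyl
  have hwx_ne : w ≠ x := S.arc_ne hwx
  have hwh_ne : w ≠ h := S.arc_ne hwh
  have hxyh_ne : x ≠ yh := S.arc_ne hxyh
  have hxyl_ne : x ≠ yl := S.arc_ne hxyl
  have hdwx : S.dep w < S.dep x := S.arc_dep_lt hwx
  have hdwh : S.dep w < S.dep h := S.arc_dep_lt hwh
  have hdxyh : S.dep x < S.dep yh := S.arc_dep_lt hxyh
  have hdxyl : S.dep x < S.dep yl := S.arc_dep_lt hxyl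
  have hwyh_ne : w ≠ yh := fun e => absurd (hdwx.trans hdxyh) (e ▸ lt_irrefl _)
  have hwyl_ne : w ≠ yl := fun e => absurd (hdwx.trans hdxyl) (e ▸ lt_irrefl _)
  have hhyl_ne : h ≠ yl := fun e => hwx_ne (S.parent_unique hwh (by rw [e]; exact hxyl))
  have hhyh_ne : h ≠ yh := fun e => hwx_ne (S.parent_unique hwh (by rw [e]; exact hxyh))
  have hwP : w ∉ I.P := by
    intro hp
    have h1 : {c | (w, c) ∈ S.A}.ncard ≤ 1 := S.items_outdeg_le_one w hp
    have h2 : {c | (w, c) ∈ S.A}.ncard = 2 := hwdeg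
    omega
  have hxP : x ∉ I.P := by
    intro hp
    have h1 : {c | (x, c) ∈ S.A}.ncard ≤ 1 := S.items_outdeg_le_one x hp
    have h2 : {c | (x, c) ∈ S.A}.ncard = 2 := hxdeg
    omega
  have hNwyl : (w, yl) ∉ S.A := fun hm => hwx_ne (S.parent_unique hm hxyl)
  have hNxh : (x, h) ∉ S.A := fun hm => hwx_ne (S.parent_unique hwh hm)
  have hchw : {c | (w, c) ∈ S.A} = {h, x} := S.children_eq_pair hwh hwx hhx
  have hchx : {c | (x, c) ∈ S.A} = {yh, yl} := S.children_eq_pair hxyh hxyl hyy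
  -- arc membership characterizations in the flipped arc set
  have hA'w : ∀ v, ((w, v) ∈ flipSet S.A w x h yl) ↔ (v = x ∨ v = yl) := by
    intro v
    rw [mem_flipSet]
    constructor
    · rintro (⟨hA, hn1, hn2⟩ | heq | heq)
      · have hv : v ∈ ({h, x} : Set α) := hchw ▸ hA
        rcases hv with rfl | rfl
        · exact absurd rfl hn1
        · exact Or.inl rfl
      · rw [Prod.ext_iff] at heq; exact Or.inr heq.2
      · rw [Prod.ext_iff] at heq; exact absurd heq.1 hwx_ne
    · rintro (rfl | rfl)
      · exact Or.inl ⟨hwx, fun e => hhx ((Prod.ext_iff.mp e).2).symm,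
          fun e => hwx_ne (Prod.ext_iff.mp e).1⟩
      · exact Or.inr (Or.inl rfl)
  have hA'x : ∀ v, ((x, v) ∈ flipSet S.A w x h yl) ↔ (v = yh ∨ v = h) := by
    intro v
    rw [mem_flipSet]
    constructor
    · rintro (⟨hA, hn1, hn2⟩ | heq | heq)
      · have hv : v ∈ ({yh, yl} : Set α) := hchx ▸ hA
        rcases hv with rfl | rfl
        · exact Or.inl rfl
        · exact absurd rfl hn2
      · rw [Prod.ext_iff] at heq; exact absurd heq.1 hwx_ne.symm
      · rw [Prod.ext_iff] at heq; exact Or.inr heq.2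
    · rintro (rfl | rfl)
      · exact Or.inl ⟨hxyh, fun e => hwx_ne ((Prod.ext_iff.mp e).1).symm,
          fun e => hyy (Prod.ext_iff.mp e).2⟩
      · exact Or.inr (Or.inr rfl)
  have hA'other : ∀ u v, u ≠ w → u ≠ x →
      ((u, v) ∈ flipSet S.A w x h yl ↔ (u, v) ∈ S.A) := by
    intro u v huw hux
    rw [mem_flipSet]
    constructor
    · rintro (⟨hA, _, _⟩ | heq | heq)
      · exact hA
      · rw [Prod.ext_iff] at heq; exact absurd heq.1 huw
      · rw [Prod.ext_iff] at heq; exact absurd heq.1 hux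
    · intro hA
      exact Or.inl ⟨hA, fun e => huw (Prod.ext_iff.mp e).1, fun e => hux (Prod.ext_iff.mp e).1⟩
  have hA'into : ∀ u v, v ≠ h → v ≠ yl →
      ((u, v) ∈ flipSet S.A w x h yl ↔ (u, v) ∈ S.A) := by
    intro u v hvh hvyl
    rw [mem_flipSet]
    constructor
    · rintro (⟨hA, _, _⟩ | heq | heq)
      · exact hA
      · rw [Prod.ext_iff] at heq; exact absurd heq.2 hvyl
      · rw [Prod.ext_iff] at heq; exact absurd heq.2 hvh
    · intro hA
      exact Or.inl ⟨hA, fun e => hvh (Prod.ext_iff.mp e).2, fun e => hvyl (Prod.ext_iff.mp e).2⟩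
  have hA'h : ∀ u, ((u, h) ∈ flipSet S.A w x h yl) ↔ u = x := by
    intro u
    rw [mem_flipSet]
    constructor
    · rintro (⟨hA, hn1, _⟩ | heq | heq)
      · have : u = w := S.parent_unique hA hwh
        exact absurd (by rw [this]) hn1
      · rw [Prod.ext_iff] at heq; exact absurd heq.2 hhyl_ne
      · rw [Prod.ext_iff] at heq; exact heq.1
    · rintro rfl; exact Or.inr (Or.inr rfl)
  have hA'yl : ∀ u, ((u, yl) ∈ flipSet S.A w x h yl) ↔ u = w := by
    intro u
    rw [mem_flipSet]
    constructor
    · rintro (⟨hA, _, hn2⟩ | heq | heq)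
      · have : u = x := S.parent_unique hA hxyl
        exact absurd (by rw [this]) hn2
      · rw [Prod.ext_iff] at heq; exact heq.1
      · rw [Prod.ext_iff] at heq; exact absurd heq.2.symm hhyl_ne
    · rintro rfl; exact Or.inr (Or.inl rfl)
  -- the schedule axioms for the flipped arc set
  have harcs : ∀ a ∈ flipSet S.A w x h yl, a.1 ∈ S.W ∧ a.2 ∈ S.W := by
    rintro ⟨a, b⟩ hab
    rcases mem_flipSet.mp hab with ⟨hA, _, _⟩ | heq | heq
    · exact S.arcs_subset _ hA
    · rw [Prod.ext_iff] at heq; obtain ⟨rfl, rfl⟩ := heq; exact ⟨hwW, hylW⟩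
    · rw [Prod.ext_iff] at heq; obtain ⟨rfl, rfl⟩ := heq; exact ⟨hxW, hhW⟩
  have hnoroot : ∀ u, (u, I.r) ∉ flipSet S.A w x h yl := by
    intro u hm
    rcases mem_flipSet.mp hm with ⟨hA, _, _⟩ | heq | heq
    · exact S.no_arc_into_root u hA
    · rw [Prod.ext_iff] at heq; exact S.arc_snd_ne_root hxyl heq.2.symm
    · rw [Prod.ext_iff] at heq; exact S.arc_snd_ne_root hwh heq.2.symm
  have huniq : ∀ v ∈ S.W, v ≠ I.r → ∃! u, (u, v) ∈ flipSet S.A w x h yl := by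
    intro v hv hvr
    by_cases hvh : v = h
    · subst hvh
      exact ⟨x, (hA'h x).mpr rfl, fun u hu => (hA'h u).mp hu⟩
    by_cases hvyl : v = yl
    · subst hvyl
      exact ⟨w, (hA'yl w).mpr rfl, fun u hu => (hA'yl u).mp hu⟩
    obtain ⟨u, hu, hun⟩ := S.unique_in_arc v hv hvr
    exact ⟨u, (hA'into u v hvh hvyl).mpr hu,
      fun u' hu' => hun u' ((hA'into u' v hvh hvyl).mp hu')⟩
  have hreach' : ∀ v ∈ S.W,
      Relation.ReflTransGen (fun u z => (u, z) ∈ flipSet S.A w x h yl) I.r v := by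
    have key : ∀ n, ∀ v ∈ S.W, S.dep v ≤ n →
        Relation.ReflTransGen (fun u z => (u, z) ∈ flipSet S.A w x h yl) I.r v := by
      intro n
      induction n with
      | zero =>
          intro v hv hd
          have hc := S.dep_spec hv
          rw [Nat.le_zero.mp hd] at hc
          exact (show I.r = v from hc) ▸ Relation.ReflTransGen.refl
      | succ n ih =>
          intro v hv hd
          by_cases hvr : v = I.r
          · exact hvr ▸ Relation.ReflTransGen.refl
          obtain ⟨u, hu, _⟩ := S.unique_in_arc v hv hvr
          have hdu : S.dep u < S.dep v := S.arc_dep_lt hu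
          by_cases h1 : (u, v) = (w, h)
          · rw [Prod.ext_iff] at h1
            obtain ⟨rfl, rfl⟩ := h1
            have hrw := ih u (S.arc_fst_mem hu) (by omega)
            exact (hrw.tail ((hA'w x).mpr (Or.inl rfl))).tail ((hA'h x).mpr rfl)
          by_cases h2 : (u, v) = (x, yl)
          · rw [Prod.ext_iff] at h2
            obtain ⟨rfl, rfl⟩ := h2
            have hdw : S.dep w < S.dep u := hdwx
            have hrw := ih w hwW (by omega)
            exact hrw.tail ((hA'yl w).mpr rfl)
          · exact (ih u (S.arc_fst_mem hu) (by omega)).tail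
              (mem_flipSet.mpr (Or.inl ⟨hu, h1, h2⟩))
    intro v hv
    exact key (S.dep v) v hv le_rfl
  have hdeg2 : ∀ v ∈ S.W, {c | (v, c) ∈ flipSet S.A w x h yl}.ncard ≤ 2 := by
    intro v hv
    by_cases hvw : v = w
    · subst hvw
      have : {c | (v, c) ∈ flipSet S.A v x h yl} = {x, yl} := by
        ext c; exact (hA'w c).trans (by simp)
      rw [this, Set.ncard_pair hxyl_ne]
    by_cases hvx : v = x
    · subst hvx
      have : {c | (v, c) ∈ flipSet S.A w v h yl} = {yh, h} := by
        ext c; exact (hA'x c).trans (by simp)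
      rw [this, Set.ncard_pair (Ne.symm hhyh_ne)]
    · have : {c | (v, c) ∈ flipSet S.A w x h yl} = {c | (v, c) ∈ S.A} := by
        ext c; exact hA'other v c hvw hvx
      rw [this]
      exact S.outdeg_le_two v hv
  have hitems : ∀ p ∈ I.P, {c | (p, c) ∈ flipSet S.A w x h yl}.ncard ≤ 1 := by
    intro p hp
    have hpw : p ≠ w := fun e => hwP (e ▸ hp)
    have hpx : p ≠ x := fun e => hxP (e ▸ hp)
    have : {c | (p, c) ∈ flipSet S.A w x h yl} = {c | (p, c) ∈ S.A} := by
      ext c; exact hA'other p c hpw hpx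
    rw [this]
    exact S.items_outdeg_le_one p hp
  let S' : Schedule I :=
    { W := S.W
      A := flipSet S.A w x h yl
      μ := S.μ
      finite_W := S.finite_W
      root_mem := S.root_mem
      items_subset := S.items_subset
      arcs_subset := harcs
      no_arc_into_root := hnoroot
      unique_in_arc := huniq
      reachable := hreach'
      outdeg_le_two := hdeg2
      items_outdeg_le_one := hitems
      μ_placement := S.μ_placement }
  refine ⟨S', rfl, rfl, rfl, ?_⟩
  -- arcs of S'
  have h'wyl : (w, yl) ∈ S'.A := (hA'yl w).mpr rfl
  have h'wx : (w, x) ∈ S'.A := (hA'w x).mpr (Or.inl rfl)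
  have h'xyh : (x, yh) ∈ S'.A := (hA'x yh).mpr (Or.inl rfl)
  have h'xh : (x, h) ∈ S'.A := (hA'h x).mpr rfl
  -- conversions between reach in S and S'
  have hmirror : flipSet S'.A w x yl h = S.A :=
    flipSet_flipSet hwh hxyl hNwyl hNxh
      (fun e => hwx_ne (Prod.ext_iff.mp e).1) (fun e => hwx_ne (Prod.ext_iff.mp e).1)
  have hconv : ∀ a b : α, S'.freach w x yl h a b → S.reach a b := by
    intro a b hab
    have h1 : Relation.ReflTransGen (fun p q => (p, q) ∈ flipSet S'.A w x yl h) a b := hab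
    simp only [hmirror] at h1
    exact h1
  have hFa : ∀ a, S.reach a w → S'.reach a w :=
    fun a ha => S.freach_w hwh hwx hxyl ha
  have hFb : ∀ z a, ¬ S.reach w z → S.reach a z → S'.reach a z :=
    fun z a hz ha => S.freach_of_not_reach_w (h := h) (yl := yl) hwx hz ha
  have hFc : ∀ c, c ∈ S.W → c ≠ x → ∀ z, z ∈ S.desc c → S'.reach c z :=
    fun c hc hcx z hz => S.freach_desc hwh hwx hxyh hxyl hhx hyy hcx hz
  have hFd : ∀ z, z ∈ S.desc w → S'.reach w z :=
    fun z hz => S.freach_desc_w hwh hwx hxyh hxyl hhx hyy hz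
  have hGa : ∀ a, S'.reach a w → S.reach a w :=
    fun a ha => hconv a w (S'.freach_w h'wyl h'wx h'xh ha)
  have hGb : ∀ z a, ¬ S'.reach w z → S'.reach a z → S.reach a z :=
    fun z a hz ha => hconv a z (S'.freach_of_not_reach_w (h := yl) (yl := h) h'wx hz ha)
  have hGc : ∀ c, c ≠ x → ∀ z, z ∈ S'.desc c → S.reach c z :=
    fun c hcx z hz => hconv c z
      (S'.freach_desc h'wyl h'wx h'xyh h'xh (Ne.symm hxyl_ne) (Ne.symm hhyh_ne) hcx hz)
  -- descendant sets
  have hdesc : ∀ c, c ∈ S.W → c ≠ x → S'.desc c = S.desc c := by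
    intro c hc hcx
    ext z
    constructor
    · rintro ⟨hzW, hzr⟩; exact ⟨hzW, hGc c hcx z ⟨hzW, hzr⟩⟩
    · rintro ⟨hzW, hzr⟩; exact ⟨hzW, hFc c hc hcx z ⟨hzW, hzr⟩⟩
  -- out-degrees and handovers
  have hdeg_other : ∀ u, u ≠ w → u ≠ x → S'.outDeg u = S.outDeg u := by
    intro u huw hux
    have : {c | (u, c) ∈ S'.A} = {c | (u, c) ∈ S.A} := by
      ext c; exact hA'other u c huw hux
    exact congrArg Set.ncard this
  have hdeg'_w : S'.outDeg w = 2 := by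
    have : {c | (w, c) ∈ S'.A} = {x, yl} := by
      ext c; exact (hA'w c).trans (by simp)
    show {c | (w, c) ∈ S'.A}.ncard = 2
    rw [this, Set.ncard_pair hxyl_ne]
  have hdeg'_x : S'.outDeg x = 2 := by
    have : {c | (x, c) ∈ S'.A} = {yh, h} := by
      ext c; exact (hA'x c).trans (by simp)
    show {c | (x, c) ∈ S'.A}.ncard = 2
    rw [this, Set.ncard_pair (Ne.symm hhyh_ne)]
  have hhand : ∀ u, u ≠ w → u ≠ x → S'.handover u = S.handover u := by
    intro u huw hux
    have hset : {k : ℕ | ∃ c, (u, c) ∈ S'.A ∧ k = ((↑I.P : Set α) ∩ S'.desc c).ncard}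
        = {k : ℕ | ∃ c, (u, c) ∈ S.A ∧ k = ((↑I.P : Set α) ∩ S.desc c).ncard} := by
      ext k
      constructor
      · rintro ⟨c, hc, rfl⟩
        have hcA : (u, c) ∈ S.A := (hA'other u c huw hux).mp hc
        have hcx : c ≠ x := by rintro rfl; exact huw (S.parent_unique hcA hwx)
        exact ⟨c, hcA, by rw [hdesc c (S.arc_snd_mem hcA) hcx]⟩
      · rintro ⟨c, hc, rfl⟩
        have hcx : c ≠ x := by rintro rfl; exact huw (S.parent_unique hc hwx)
        exact ⟨c, (hA'other u c huw hux).mpr hc, by rw [hdesc c (S.arc_snd_mem hc) hcx]⟩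
    show sInf _ = sInf _
    rw [hset]
  have hHw : S.handover w = ((↑I.P : Set α) ∩ S.desc x).ncard := by
    rw [S.handover_pair hwh hwx hhx]
    exact min_eq_right hheavy_h
  have hHx : S.handover x = ((↑I.P : Set α) ∩ S.desc yl).ncard := by
    rw [S.handover_pair hxyh hxyl hyy]
    exact min_eq_right hheavy_y
  have hH'w_le : S'.handover w ≤ ((↑I.P : Set α) ∩ S.desc yl).ncard := by
    rw [S'.handover_pair h'wx h'wyl hxyl_ne, hdesc yl hylW (Ne.symm hxyl_ne)]
    exact min_le_right _ _
  have hH'x_le : S'.handover x ≤ ((↑I.P : Set α) ∩ S.desc yh).ncard := by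
    rw [S'.handover_pair h'xyh h'xh (Ne.symm hhyh_ne), hdesc yh hyhW (Ne.symm hxyh_ne)]
    exact min_le_left _ _
  have hDyh_le : ((↑I.P : Set α) ∩ S.desc yh).ncard ≤ ((↑I.P : Set α) ∩ S.desc x).ncard :=
    Set.ncard_le_ncard
      (Set.inter_subset_inter_right _
        (fun z hz => S.desc_trans (Relation.ReflTransGen.single hxyh) hz))
      ((S.finite_desc x).subset Set.inter_subset_right)
  have hDsum : ((↑I.P : Set α) ∩ S.desc yl).ncard + ((↑I.P : Set α) ∩ S.desc yh).ncard
      ≤ ((↑I.P : Set α) ∩ S.desc x).ncard := by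
    have hdisj : Disjoint ((↑I.P : Set α) ∩ S.desc yl) ((↑I.P : Set α) ∩ S.desc yh) :=
      Set.disjoint_left.mpr fun z hz1 hz2 =>
        S.desc_disjoint hxyh hxyl hyy hz2.2 hz1.2
    rw [← Set.ncard_union_eq hdisj ((S.finite_desc yl).subset Set.inter_subset_right)
      ((S.finite_desc yh).subset Set.inter_subset_right)]
    apply Set.ncard_le_ncard ?_ ((S.finite_desc x).subset Set.inter_subset_right)
    rintro z (⟨hzP, hzd⟩ | ⟨hzP, hzd⟩)
    · exact ⟨hzP, S.desc_trans (Relation.ReflTransGen.single hxyl) hzd⟩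
    · exact ⟨hzP, S.desc_trans (Relation.ReflTransGen.single hxyh) hzd⟩
  -- the path to w is unchanged
  have hrw : S.reach I.r w := S.reachable w hwW
  have h'rw : S'.reach I.r w := hFa I.r hrw
  have hPSw : S'.pathSet w = S.pathSet w := by
    ext u
    constructor
    · rintro ⟨huW, hru, huw⟩
      have huw' : S.reach u w := hGa u huw
      refine ⟨huW, ?_, huw'⟩
      by_cases hue : u = w
      · exact hue ▸ hrw
      · have hnw : ¬ S'.reach w u := by
          intro hr
          have : u ∈ S.desc w := (hdesc w hwW hwx_ne) ▸ (⟨huW, hr⟩ : u ∈ S'.desc w)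
          exact hue (S.reach_antisymm huw' this.2)
        exact hGb u I.r hnw hru
    · rintro ⟨huW, hru, huw⟩
      refine ⟨huW, ?_, hFa u huw⟩
      by_cases hue : u = w
      · exact hue ▸ h'rw
      · exact hFb u I.r (fun hr => hue (S.reach_antisymm huw hr)) hru
  have hPAw : S'.pathArcs w = S.pathArcs w := by
    have hhp : h ∉ S.pathSet w :=
      fun hm => hwh_ne (S.reach_antisymm (Relation.ReflTransGen.single hwh) hm.2.2)
    have hylp : yl ∉ S.pathSet w :=
      fun hm => hwyl_ne (S.reach_antisymm
        ((Relation.ReflTransGen.single hwx).tail hxyl) hm.2.2)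
    ext ⟨a, b⟩
    constructor
    · rintro ⟨hA, h1, h2⟩
      rw [hPSw] at h1 h2
      have hbh : b ≠ h := fun e => hhp (e ▸ h2)
      have hbyl : b ≠ yl := fun e => hylp (e ▸ h2)
      exact ⟨(hA'into a b hbh hbyl).mp hA, h1, h2⟩
    · rintro ⟨hA, h1, h2⟩
      have hbh : b ≠ h := fun e => hhp (e ▸ h2)
      have hbyl : b ≠ yl := fun e => hylp (e ▸ h2)
      exact ⟨(hA'into a b hbh hbyl).mpr hA, hPSw ▸ h1, hPSw ▸ h2⟩
  -- segments inside untouched subtrees are unchanged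
  have hseg_sub : ∀ q, q ∈ S.W → q ≠ x → ¬ S.reach q w → ¬ S.reach q x → ∀ p, p ∈ S.W →
      S'.seg q p = S.seg q p ∧ S'.segArcs q p = S.segArcs q p := by
    intro q hqW hqx hqw hqx' p hpW
    have hqdesc : S'.desc q = S.desc q := hdesc q hqW hqx
    have hs : S'.seg q p = S.seg q p := by
      ext u
      constructor
      · rintro ⟨huW, hqu, hup, hne⟩
        have hqu' : S.reach q u := by
          have h1 : u ∈ S'.desc q := ⟨huW, hqu⟩
          rw [hqdesc] at h1
          exact h1.2
        have hux : u ≠ x := fun e => hqx' (e ▸ hqu')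
        exact ⟨huW, hqu', hGc u hux p ⟨hpW, hup⟩, hne⟩
      · rintro ⟨huW, hqu, hup, hne⟩
        have hux : u ≠ x := fun e => hqx' (e ▸ hqu)
        exact ⟨huW, hFc q hqW hqx u ⟨huW, hqu⟩, hFc u huW hux p ⟨hpW, hup⟩, hne⟩
    refine ⟨hs, ?_⟩
    ext ⟨a, b⟩
    constructor
    · rintro ⟨hA, h1, h2⟩
      rw [hs] at h1 h2
      have haw : a ≠ w := by
        rintro rfl
        rcases h1 with rfl | h1
        · exact hqw Relation.ReflTransGen.refl
        · exact hqw h1.2.1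
      have hax : a ≠ x := by
        rintro rfl
        rcases h1 with rfl | h1
        · exact hqx rfl
        · exact hqx' h1.2.1
      exact ⟨(hA'other a b haw hax).mp hA, h1, h2⟩
    · rintro ⟨hA, h1, h2⟩
      have haw : a ≠ w := by
        rintro rfl
        rcases h1 with rfl | h1
        · exact hqw Relation.ReflTransGen.refl
        · exact hqw h1.2.1
      have hax : a ≠ x := by
        rintro rfl
        rcases h1 with rfl | h1
        · exact hqx rfl
        · exact hqx' h1.2.1
      exact ⟨(hA'other a b haw hax).mpr hA, hs ▸ h1, hs ▸ h2⟩
  have hnh_w : ¬ S.reach h w := S.not_reach_of_arc hwh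
  have hnh_x : ¬ S.reach h x := S.sibling_not_reach hwh hwx hhx
  have hnyh_w : ¬ S.reach yh w :=
    fun hr => absurd (hdwx.trans hdxyh) (not_lt.mpr (S.reach_dep_le hr))
  have hnyh_x : ¬ S.reach yh x := S.not_reach_of_arc hxyh
  have hnyl_w : ¬ S.reach yl w :=
    fun hr => absurd (hdwx.trans hdxyl) (not_lt.mpr (S.reach_dep_le hr))
  have hnyl_x : ¬ S.reach yl x := S.not_reach_of_arc hxyl
  have hμ' : S'.μ = S.μ := rfl
  have hxnotps : x ∉ S.pathSet w :=
    fun hm => hwx_ne (S.reach_antisymm (Relation.ReflTransGen.single hwx) hm.2.2)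
  have hwinps : w ∈ S.pathSet w := ⟨hwW, hrw, Relation.ReflTransGen.refl⟩
  -- the delay to w changes only in the handover at w
  have hdelw : S'.delayTo w + (S.handover w : ℝ) = S.delayTo w + (S'.handover w : ℝ) := by
    set B := {u ∈ S.pathSet w | S.outDeg u = 2} \ {w} with hB
    have hfinB : B.Finite :=
      ((S.finite_pathSet w).subset (Set.sep_subset _ _)).subset Set.diff_subset
    have hwB : w ∉ B := fun hm => hm.2 rfl
    have hold : {u ∈ S.pathSet w | S.outDeg u = 2} = insert w B := by
      have hwmem : w ∈ {u ∈ S.pathSet w | S.outDeg u = 2} := ⟨hwinps, hwdeg⟩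
      have : insert w B = {u ∈ S.pathSet w | S.outDeg u = 2} := by
        rw [hB, Set.insert_diff_singleton, Set.insert_eq_self.mpr hwmem]
      exact this.symm
    have hnew : {u ∈ S'.pathSet w | S'.outDeg u = 2} = insert w B := by
      ext u
      constructor
      · rintro ⟨h1, h2⟩
        rw [hPSw] at h1
        by_cases hue : u = w
        · exact Or.inl hue
        · have hux : u ≠ x := fun e => hxnotps (e ▸ h1)
          exact Or.inr ⟨⟨h1, by rw [← hdeg_other u hue hux]; exact h2⟩, hue⟩
      · rintro (rfl | ⟨⟨h1, h2⟩, hne⟩)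
        · exact ⟨by rw [hPSw]; exact hwinps, hdeg'_w⟩
        · have hux : u ≠ x := fun e => hxnotps (e ▸ h1)
          exact ⟨by rw [hPSw]; exact h1, by rw [hdeg_other u hne hux]; exact h2⟩
    have hsum_old : (∑ᶠ u ∈ {u ∈ S.pathSet w | S.outDeg u = 2}, (S.handover u : ℝ))
        = (S.handover w : ℝ) + ∑ᶠ u ∈ B, (S.handover u : ℝ) := by
      rw [hold, finsum_mem_insert'' hwB hfinB]
    have hsum_new : (∑ᶠ u ∈ {u ∈ S'.pathSet w | S'.outDeg u = 2}, (S'.handover u : ℝ))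
        = (S'.handover w : ℝ) + ∑ᶠ u ∈ B, (S.handover u : ℝ) := by
      rw [hnew, finsum_mem_insert'' hwB hfinB]
      congr 1
      apply finsum_mem_congr rfl
      intro u hu
      have hux : u ≠ x := fun e => hxnotps (e ▸ hu.1.1)
      rw [hhand u hu.2 hux]
    unfold Schedule.delayTo
    rw [hsum_new, hsum_old, hμ', hPAw, hPSw]
    ring
  -- per-item comparison
  have key : ∀ p ∈ I.P, S'.delayTo p ≤ S.delayTo p := by
    intro p hp
    have hpW : p ∈ S.W := S.items_subset hp
    by_cases hwp : S.reach w p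
    · -- p lies in the subtree of w
      have hpw_ne : p ≠ w := fun e => hwP (e ▸ hp)
      have hpx_ne : p ≠ x := fun e => hxP (e ▸ hp)
      have h'wp : S'.reach w p := hFd p ⟨hpW, hwp⟩
      have hDold := S.delayTo_decomp hwW hrw hwp
      have hDnew := S'.delayTo_decomp hwW h'rw h'wp
      rcases S.desc_child_decomp (⟨hpW, hwp⟩ : p ∈ S.desc w) with rfl | ⟨c, hc, hpc⟩
      · exact absurd rfl hpw_ne
      have hcmem : c ∈ ({h, x} : Set α) := hchw ▸ hc
      rcases hcmem with hc1 | hc1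
      · -- CASE H : p in the subtree of h
        rw [hc1] at hpc
        have hhp : S.reach h p := hpc.2
        set s := S.seg h p with hs_def
        set sa := S.segArcs h p with hsa_def
        have hfs : s.Finite := S.finite_seg h p
        have hfsa : sa.Finite := S.finite_segArcs h p
        have hsub := hseg_sub h hhW hhx hnh_w hnh_x p hpW
        have h'hp : S'.reach h p := hFc h hhW hhx p ⟨hpW, hhp⟩
        have h'xp : S'.reach x p := (S'.reach_arc h'xh).trans h'hp
        have hsegdec : S.seg w p = insert h s := S.seg_step hwh hhp
        have hsegadec : S.segArcs w p = insert (w, h) sa := S.segArcs_step hwh hhp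
        have hsegdec' : S'.seg w p = insert x (insert h s) := by
          rw [S'.seg_step h'wx h'xp, S'.seg_step h'xh h'hp, hsub.1]
        have hsegadec' : S'.segArcs w p = insert (w, x) (insert (x, h) sa) := by
          rw [S'.segArcs_step h'wx h'xp, S'.segArcs_step h'xh h'hp, hsub.2]
        have hZwx : ∀ u ∈ insert h s, u ≠ w ∧ u ≠ x := by
          rintro u (rfl | hu)
          · exact ⟨Ne.symm hwh_ne, hhx⟩
          · exact ⟨fun e => hnh_w (e ▸ hu.2.1), fun e => hnh_x (e ▸ hu.2.1)⟩
        have hhs : h ∉ s := S.self_not_mem_seg h p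
        have hxs : x ∉ insert h s := fun hm => ((hZwx x hm).2) rfl
        have hwhsa : (w, h) ∉ sa := fun hm => hhs hm.2.2
        have hxhsa : (x, h) ∉ sa := fun hm => hhs hm.2.2
        have hwxsa : (w, x) ∉ insert (x, h) sa := by
          rintro (heq | hm)
          · exact hwx_ne (Prod.ext_iff.mp heq).1
          · exact hxs (Or.inr hm.2.2)
        have hA_old : (∑ᶠ a ∈ S.segArcs w p, dist (S.μ a.1) (S.μ a.2))
            = dist (S.μ w) (S.μ h) + ∑ᶠ a ∈ sa, dist (S.μ a.1) (S.μ a.2) := by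
          rw [hsegadec, finsum_mem_insert'' hwhsa hfsa]
        have hA_new : (∑ᶠ a ∈ S'.segArcs w p, dist (S'.μ a.1) (S'.μ a.2))
            = dist (S.μ w) (S.μ x) + (dist (S.μ x) (S.μ h)
              + ∑ᶠ a ∈ sa, dist (S.μ a.1) (S.μ a.2)) := by
          rw [hμ', hsegadec', finsum_mem_insert'' hwxsa (hfsa.insert _),
            finsum_mem_insert'' hxhsa hfsa]
        have hd1 : dist (S.μ w) (S.μ x) = dist (S.μ w) (S.μ h) := by rw [hμ]
        have hd2 : dist (S.μ x) (S.μ h) = 0 := by rw [← hμ]; exact dist_self _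
        have hC : ((↑I.P : Set α) ∩ S'.seg w p) = ((↑I.P : Set α) ∩ S.seg w p) := by
          rw [hsegdec, hsegdec']
          ext z
          constructor
          · rintro ⟨hzP, (rfl | hzm)⟩
            · exact absurd hzP hxP
            · exact ⟨hzP, hzm⟩
          · rintro ⟨hzP, hzm⟩
            exact ⟨hzP, Or.inr hzm⟩
        have hbifZ : {u ∈ insert h s | S'.outDeg u = 2} = {u ∈ insert h s | S.outDeg u = 2} := by
          ext u
          constructor
          · rintro ⟨h1, h2⟩
            exact ⟨h1, by rw [← hdeg_other u (hZwx u h1).1 (hZwx u h1).2]; exact h2⟩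
          · rintro ⟨h1, h2⟩
            exact ⟨h1, by rw [hdeg_other u (hZwx u h1).1 (hZwx u h1).2]; exact h2⟩
        have hxbif : x ∉ {u ∈ insert h s | S.outDeg u = 2} := fun hm => hxs hm.1
        have hfbZ : {u ∈ insert h s | S.outDeg u = 2}.Finite :=
          ((hfs.insert h).subset (Set.sep_subset _ _))
        have hH_old : ∑ᶠ u ∈ {u ∈ S.seg w p | S.outDeg u = 2}, (S.handover u : ℝ)
            = ∑ᶠ u ∈ {u ∈ insert h s | S.outDeg u = 2}, (S.handover u : ℝ) := by
          rw [hsegdec]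
        have hH_new : ∑ᶠ u ∈ {u ∈ S'.seg w p | S'.outDeg u = 2}, (S'.handover u : ℝ)
            = (S'.handover x : ℝ)
              + ∑ᶠ u ∈ {u ∈ insert h s | S.outDeg u = 2}, (S.handover u : ℝ) := by
          rw [hsegdec', S'.bif_insert hdeg'_x, hbifZ, finsum_mem_insert'' hxbif hfbZ]
          congr 1
          apply finsum_mem_congr rfl
          intro u hu
          rw [hhand u (hZwx u hu.1).1 (hZwx u hu.1).2]
        have hhov : (S'.handover w : ℝ) + (S'.handover x : ℝ) ≤ (S.handover w : ℝ) := by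
          have hn : S'.handover w + S'.handover x ≤ S.handover w := by
            rw [hHw]
            calc S'.handover w + S'.handover x
                ≤ ((↑I.P : Set α) ∩ S.desc yl).ncard + ((↑I.P : Set α) ∩ S.desc yh).ncard :=
                  add_le_add hH'w_le hH'x_le
              _ ≤ _ := hDsum
          exact_mod_cast hn
        rw [hDold, hDnew, hA_old, hA_new, hH_old, hH_new, hC]
        linarith [hdelw]
      · -- c = x : p in the subtree of x
        rw [hc1] at hpc
        rcases S.desc_child_decomp hpc with rfl | ⟨d, hd, hpd⟩
        · exact absurd rfl hpx_ne
        have hdmem : d ∈ ({yh, yl} : Set α) := hchx ▸ hd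
        have hxp : S.reach x p := hpc.2
        rcases hdmem with hd1 | hd1
        · -- CASE YH
          rw [hd1] at hpd
          have hyhp : S.reach yh p := hpd.2
          set s := S.seg yh p with hs_def
          set sa := S.segArcs yh p with hsa_def
          have hfs : s.Finite := S.finite_seg yh p
          have hfsa : sa.Finite := S.finite_segArcs yh p
          have hsub := hseg_sub yh hyhW (Ne.symm hxyh_ne) hnyh_w hnyh_x p hpW
          have h'yhp : S'.reach yh p := hFc yh hyhW (Ne.symm hxyh_ne) p ⟨hpW, hyhp⟩
          have h'xp : S'.reach x p := (S'.reach_arc h'xyh).trans h'yhp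
          have hsegdec : S.seg w p = insert x (insert yh s) := by
            rw [S.seg_step hwx hxp, S.seg_step hxyh hyhp]
          have hsegadec : S.segArcs w p = insert (w, x) (insert (x, yh) sa) := by
            rw [S.segArcs_step hwx hxp, S.segArcs_step hxyh hyhp]
          have hsegdec' : S'.seg w p = insert x (insert yh s) := by
            rw [S'.seg_step h'wx h'xp, S'.seg_step h'xyh h'yhp, hsub.1]
          have hsegadec' : S'.segArcs w p = insert (w, x) (insert (x, yh) sa) := by
            rw [S'.segArcs_step h'wx h'xp, S'.segArcs_step h'xyh h'yhp, hsub.2]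
          have hZwx : ∀ u ∈ insert yh s, u ≠ w ∧ u ≠ x := by
            rintro u (rfl | hu)
            · exact ⟨Ne.symm hwyh_ne, Ne.symm hxyh_ne⟩
            · exact ⟨fun e => hnyh_w (e ▸ hu.2.1), fun e => hnyh_x (e ▸ hu.2.1)⟩
          have hxZ : x ∉ {u ∈ insert yh s | S.outDeg u = 2} := fun hm => ((hZwx x hm.1).2) rfl
          have hfbZ : {u ∈ insert yh s | S.outDeg u = 2}.Finite :=
            ((hfs.insert yh).subset (Set.sep_subset _ _))
          have hbifZ : {u ∈ insert yh s | S'.outDeg u = 2}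
              = {u ∈ insert yh s | S.outDeg u = 2} := by
            ext u
            constructor
            · rintro ⟨h1, h2⟩
              exact ⟨h1, by rw [← hdeg_other u (hZwx u h1).1 (hZwx u h1).2]; exact h2⟩
            · rintro ⟨h1, h2⟩
              exact ⟨h1, by rw [hdeg_other u (hZwx u h1).1 (hZwx u h1).2]; exact h2⟩
          have hA_eq : (∑ᶠ a ∈ S'.segArcs w p, dist (S'.μ a.1) (S'.μ a.2))
              = ∑ᶠ a ∈ S.segArcs w p, dist (S.μ a.1) (S.μ a.2) := by
            rw [hμ', hsegadec', hsegadec]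
          have hC : ((↑I.P : Set α) ∩ S'.seg w p) = ((↑I.P : Set α) ∩ S.seg w p) := by
            rw [hsegdec', hsegdec]
          have hH_old : ∑ᶠ u ∈ {u ∈ S.seg w p | S.outDeg u = 2}, (S.handover u : ℝ)
              = (S.handover x : ℝ)
                + ∑ᶠ u ∈ {u ∈ insert yh s | S.outDeg u = 2}, (S.handover u : ℝ) := by
            rw [hsegdec, S.bif_insert hxdeg, finsum_mem_insert'' hxZ hfbZ]
          have hH_new : ∑ᶠ u ∈ {u ∈ S'.seg w p | S'.outDeg u = 2}, (S'.handover u : ℝ)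
              = (S'.handover x : ℝ)
                + ∑ᶠ u ∈ {u ∈ insert yh s | S.outDeg u = 2}, (S.handover u : ℝ) := by
            rw [hsegdec', S'.bif_insert hdeg'_x, hbifZ, finsum_mem_insert'' hxZ hfbZ]
            congr 1
            apply finsum_mem_congr rfl
            intro u hu
            rw [hhand u (hZwx u hu.1).1 (hZwx u hu.1).2]
          have hhov1 : (S'.handover w : ℝ) ≤ (S.handover x : ℝ) := by
            have h1 : S'.handover w ≤ S.handover x := by rw [hHx]; exact hH'w_le
            exact_mod_cast h1
          have hhov2 : (S'.handover x : ℝ) ≤ (S.handover w : ℝ) := by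
            have h1 : S'.handover x ≤ S.handover w := by
              rw [hHw]; exact hH'x_le.trans hDyh_le
            exact_mod_cast h1
          rw [hDold, hDnew, hA_eq, hH_old, hH_new, hC]
          linarith [hdelw]
        · -- CASE YL
          rw [hd1] at hpd
          have hylp : S.reach yl p := hpd.2
          set s := S.seg yl p with hs_def
          set sa := S.segArcs yl p with hsa_def
          have hfs : s.Finite := S.finite_seg yl p
          have hfsa : sa.Finite := S.finite_segArcs yl p
          have hsub := hseg_sub yl hylW (Ne.symm hxyl_ne) hnyl_w hnyl_x p hpW
          have h'ylp : S'.reach yl p := hFc yl hylW (Ne.symm hxyl_ne) p ⟨hpW, hylp⟩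
          have hsegdec : S.seg w p = insert x (insert yl s) := by
            rw [S.seg_step hwx hxp, S.seg_step hxyl hylp]
          have hsegadec : S.segArcs w p = insert (w, x) (insert (x, yl) sa) := by
            rw [S.segArcs_step hwx hxp, S.segArcs_step hxyl hylp]
          have hsegdec' : S'.seg w p = insert yl s := by
            rw [S'.seg_step h'wyl h'ylp, hsub.1]
          have hsegadec' : S'.segArcs w p = insert (w, yl) sa := by
            rw [S'.segArcs_step h'wyl h'ylp, hsub.2]
          have hZwx : ∀ u ∈ insert yl s, u ≠ w ∧ u ≠ x := by
            rintro u (rfl | hu)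
            · exact ⟨Ne.symm hwyl_ne, Ne.symm hxyl_ne⟩
            · exact ⟨fun e => hnyl_w (e ▸ hu.2.1), fun e => hnyl_x (e ▸ hu.2.1)⟩
          have hyls : yl ∉ s := S.self_not_mem_seg yl p
          have hxylsa : (x, yl) ∉ sa := fun hm => hyls hm.2.2
          have hwylsa : (w, yl) ∉ sa := fun hm => hyls hm.2.2
          have hwxsa : (w, x) ∉ insert (x, yl) sa := by
            rintro (heq | hm)
            · exact hwx_ne (Prod.ext_iff.mp heq).1
            · exact ((hZwx x (Or.inr hm.2.2)).2) rfl
          have hA_old : (∑ᶠ a ∈ S.segArcs w p, dist (S.μ a.1) (S.μ a.2))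
              = dist (S.μ w) (S.μ x) + (dist (S.μ x) (S.μ yl)
                + ∑ᶠ a ∈ sa, dist (S.μ a.1) (S.μ a.2)) := by
            rw [hsegadec, finsum_mem_insert'' hwxsa (hfsa.insert _),
              finsum_mem_insert'' hxylsa hfsa]
          have hA_new : (∑ᶠ a ∈ S'.segArcs w p, dist (S'.μ a.1) (S'.μ a.2))
              = dist (S.μ w) (S.μ yl) + ∑ᶠ a ∈ sa, dist (S.μ a.1) (S.μ a.2) := by
            rw [hμ', hsegadec', finsum_mem_insert'' hwylsa hfsa]
          have hC : ((↑I.P : Set α) ∩ S'.seg w p) = ((↑I.P : Set α) ∩ S.seg w p) := by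
            rw [hsegdec, hsegdec']
            ext z
            constructor
            · rintro ⟨hzP, hzm⟩
              exact ⟨hzP, Or.inr hzm⟩
            · rintro ⟨hzP, (rfl | hzm)⟩
              · exact absurd hzP hxP
              · exact ⟨hzP, hzm⟩
          have hxZ : x ∉ {u ∈ insert yl s | S.outDeg u = 2} := fun hm => ((hZwx x hm.1).2) rfl
          have hfbZ : {u ∈ insert yl s | S.outDeg u = 2}.Finite :=
            ((hfs.insert yl).subset (Set.sep_subset _ _))
          have hbifZ : {u ∈ insert yl s | S'.outDeg u = 2}
              = {u ∈ insert yl s | S.outDeg u = 2} := by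
            ext u
            constructor
            · rintro ⟨h1, h2⟩
              exact ⟨h1, by rw [← hdeg_other u (hZwx u h1).1 (hZwx u h1).2]; exact h2⟩
            · rintro ⟨h1, h2⟩
              exact ⟨h1, by rw [hdeg_other u (hZwx u h1).1 (hZwx u h1).2]; exact h2⟩
          have hH_old : ∑ᶠ u ∈ {u ∈ S.seg w p | S.outDeg u = 2}, (S.handover u : ℝ)
              = (S.handover x : ℝ)
                + ∑ᶠ u ∈ {u ∈ insert yl s | S.outDeg u = 2}, (S.handover u : ℝ) := by
            rw [hsegdec, S.bif_insert hxdeg, finsum_mem_insert'' hxZ hfbZ]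
          have hH_new : ∑ᶠ u ∈ {u ∈ S'.seg w p | S'.outDeg u = 2}, (S'.handover u : ℝ)
              = ∑ᶠ u ∈ {u ∈ insert yl s | S.outDeg u = 2}, (S.handover u : ℝ) := by
            rw [hsegdec', hbifZ]
            apply finsum_mem_congr rfl
            intro u hu
            rw [hhand u (hZwx u hu.1).1 (hZwx u hu.1).2]
          have htri : dist (S.μ w) (S.μ yl) ≤ dist (S.μ w) (S.μ x) + dist (S.μ x) (S.μ yl) :=
            dist_triangle _ _ _
          have hhov : (S'.handover w : ℝ) ≤ (S.handover w : ℝ) + (S.handover x : ℝ) := by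
            have h1 : S'.handover w ≤ S.handover x := by rw [hHx]; exact hH'w_le
            have h1' : (S'.handover w : ℝ) ≤ (S.handover x : ℝ) := by exact_mod_cast h1
            have h2 : (0 : ℝ) ≤ (S.handover w : ℝ) := Nat.cast_nonneg _
            linarith
          rw [hDold, hDnew, hA_old, hA_new, hH_old, hH_new, hC]
          linarith [hdelw]
    · -- p not in the subtree of w : nothing changes
      have hnw' : ¬ S'.reach w p := by
        intro hr
        have h1 : p ∈ S'.desc w := ⟨hpW, hr⟩
        rw [hdesc w hwW hwx_ne] at h1
        exact hwp h1.2
      have hPS : S'.pathSet p = S.pathSet p := by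
        ext u
        constructor
        · rintro ⟨huW, hru, hup⟩
          exact ⟨huW, hGb u I.r (fun hr => hnw' (hr.trans hup)) hru, hGb p u hnw' hup⟩
        · rintro ⟨huW, hru, hup⟩
          exact ⟨huW, hFb u I.r (fun hr => hwp (hr.trans hup)) hru, hFb p u hwp hup⟩
      have hwps : w ∉ S.pathSet p := fun hm => hwp hm.2.2
      have hxps : x ∉ S.pathSet p :=
        fun hm => hwp ((Relation.ReflTransGen.single hwx).trans hm.2.2)
      have hPA : S'.pathArcs p = S.pathArcs p := by
        ext ⟨a, b⟩
        constructor
        · rintro ⟨hA, h1, h2⟩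
          rw [hPS] at h1 h2
          exact ⟨(hA'other a b (fun e => hwps (e ▸ h1)) (fun e => hxps (e ▸ h1))).mp hA, h1, h2⟩
        · rintro ⟨hA, h1, h2⟩
          exact ⟨(hA'other a b (fun e => hwps (e ▸ h1)) (fun e => hxps (e ▸ h1))).mpr hA,
            hPS ▸ h1, hPS ▸ h2⟩
      have hbif : {u ∈ S'.pathSet p | S'.outDeg u = 2} = {u ∈ S.pathSet p | S.outDeg u = 2} := by
        ext u
        constructor
        · rintro ⟨h1, h2⟩
          rw [hPS] at h1
          refine ⟨h1, ?_⟩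
          rw [← hdeg_other u (fun e => hwps (e ▸ h1)) (fun e => hxps (e ▸ h1))]
          exact h2
        · rintro ⟨h1, h2⟩
          refine ⟨hPS ▸ h1, ?_⟩
          rw [hdeg_other u (fun e => hwps (e ▸ h1)) (fun e => hxps (e ▸ h1))]
          exact h2
      apply le_of_eq
      have e3 : (∑ᶠ u ∈ {u ∈ S'.pathSet p | S'.outDeg u = 2}, (S'.handover u : ℝ))
          = ∑ᶠ u ∈ {u ∈ S.pathSet p | S.outDeg u = 2}, (S.handover u : ℝ) := by
        rw [hbif]
        apply finsum_mem_congr rfl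
        intro u hu
        rw [hhand u (fun e => hwps (e ▸ hu.1)) (fun e => hxps (e ▸ hu.1))]
      unfold Schedule.delayTo
      rw [e3, hμ', hPA, hPS]
  -- conclude
  refine Finset.sup'_le _ _ fun p hp => ?_
  exact (key p hp).trans (Finset.le_sup' _ hp)
end

section
/- Lower bound: Every feasible schedule (W,A,μ) has length c(A,μ) ≥ MST/2 and number of vehicles |W_0| ≥ (MST/2 + n·δ)/Δ. -/
variable {α M : Type*} [MetricSpace M]

noncomputable def walkLength : List M → ℝ
  | [] => 0
  | [_] => 0
  | a :: b :: l => dist a b + walkLength (b :: l)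

@[simp] theorem walkLength_nil : walkLength ([] : List M) = 0 := rfl

@[simp] theorem walkLength_singleton (a : M) : walkLength [a] = 0 := rfl

@[simp] theorem walkLength_cons_cons (a b : M) (l : List M) :
    walkLength (a :: b :: l) = dist a b + walkLength (b :: l) := rfl

theorem walkLength_cons {a b : M} {l : List M} (h : l.head? = some b) :
    walkLength (a :: l) = dist a b + walkLength l := by
  obtain ⟨l, rfl⟩ := List.head?_eq_some_iff.mp h
  rfl

theorem walkLength_append {a b : M} {l₁ l₂ : List M} (h₁ : l₁.getLast? = some a)
    (h₂ : l₂.head? = some b) :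
    walkLength (l₁ ++ l₂) = walkLength l₁ + dist a b + walkLength l₂ := by
  induction l₁ with
  | nil => simp at h₁
  | cons c l₁ ih =>
    cases l₁ with
    | nil =>
      simp only [List.getLast?_singleton, Option.some.injEq] at h₁
      simp [walkLength_cons h₂, h₁]
    | cons d l₁ =>
      simp only [List.cons_append, walkLength_cons_cons] at ih ⊢
      rw [ih (by simpa using h₁)]
      ring

theorem walkLength_le_cons (a : M) (l : List M) : walkLength l ≤ walkLength (a :: l) := by
  cases l with
  | nil => simp
  | cons b l => simp

theorem walkLength_cons_le_cons_cons (a b : M) (l : List M) :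
    walkLength (a :: l) ≤ walkLength (a :: b :: l) := by
  cases l with
  | nil => simp
  | cons c l => simpa [← add_assoc] using dist_triangle a b c

theorem walkLength_cons_le_cons_of_sublist {l₁ l₂ : List M} (h : l₁.Sublist l₂) (a : M) :
    walkLength (a :: l₁) ≤ walkLength (a :: l₂) := by
  induction h generalizing a with
  | slnil => rfl
  | cons b _ ih => exact (ih a).trans (walkLength_cons_le_cons_cons a b _)
  | cons_cons b _ ih => simpa using ih b

theorem walkLength_le_of_sublist {l₁ l₂ : List M} (h : l₁.Sublist l₂) :
    walkLength l₁ ≤ walkLength l₂ := by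
  induction h with
  | slnil => rfl
  | cons b _ ih => exact ih.trans (walkLength_le_cons b _)
  | cons_cons b h _ => exact walkLength_cons_le_cons_of_sublist h b

theorem walkLength_eq_sum (l : List M) :
    walkLength l = ∑ i : Fin (l.length - 1), dist l[i.1] l[i.1 + 1] := by
  match l with
  | [] => simp
  | [a] => simp
  | a :: b :: l =>
    rw [walkLength_cons_cons, walkLength_eq_sum (b :: l)]
    show _ = ∑ i : Fin (l.length + 1), _
    rw [Fin.sum_univ_succ]
    rfl

open SimpleGraph in
theorem exists_isTree_finsum_edgeSet_eq_walkLength {V : Type*} [Fintype V] (f : V → M)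
    {d : List V} (hd : d.Nodup) (hmem : ∀ v, v ∈ d) (hne : d ≠ []) :
    ∃ T : SimpleGraph V, T.IsTree ∧
      ∑ᶠ e ∈ T.edgeSet,
        (Sym2.lift ⟨fun u v => dist (f u) (f v), fun _ _ => dist_comm _ _⟩ : Sym2 V → ℝ) e
        = walkLength (d.map f) := by
  classical
  obtain ⟨k, hk⟩ : ∃ k, d.length = k + 1 :=
    ⟨d.length - 1, by have := List.length_pos_iff.mpr hne; omega⟩
  let F : Fin k → Sym2 V := fun i => s(d[i.1], d[i.1 + 1])
  have hF : F.Injective := by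
    intro i j h
    rcases Sym2.eq_iff.mp h with ⟨h₁, -⟩ | ⟨h₁, h₂⟩
    · exact Fin.ext (hd.getElem_inj_iff.mp h₁)
    · have := hd.getElem_inj_iff.mp h₁
      have := hd.getElem_inj_iff.mp h₂
      omega
  have hadj : ∀ (j : ℕ) (hj : j < k), (fromEdgeSet (Set.range F)).Adj d[j] d[j + 1] := by
    intro j hj
    refine (fromEdgeSet_adj _).mpr ⟨⟨⟨j, hj⟩, rfl⟩, fun h => ?_⟩
    have := hd.getElem_inj_iff.mp h
    omega
  have hedges : (fromEdgeSet (Set.range F)).edgeSet = Set.range F := by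
    rw [edgeSet_fromEdgeSet, sdiff_eq_self_iff_disjoint, Set.disjoint_right]
    rintro _ ⟨i, rfl⟩ hdiag
    exact (hadj i i.2).ne (Sym2.mk_isDiag_iff.mp hdiag)
  have hreach : ∀ (j : ℕ) (hj : j < k + 1),
      (fromEdgeSet (Set.range F)).Reachable d[0] d[j] := by
    intro j hj
    induction j with
    | zero => rfl
    | succ j ih => exact (ih (by omega)).trans (hadj j (by omega)).reachable
  refine ⟨fromEdgeSet (Set.range F), ?_, ?_⟩
  · rw [isTree_iff_connected_and_card, hedges, Nat.card_range_of_injective hF,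
      Nat.card_eq_fintype_card, Fintype.card_fin, ← hk,
      ← Nat.card_congr (hd.getEquivOfForallMemList d hmem), Nat.card_eq_fintype_card,
      Fintype.card_fin]
    have : Nonempty V := ⟨d[0]⟩
    refine ⟨⟨fun u v => ?_⟩, rfl⟩
    obtain ⟨i, hi, rfl⟩ := List.mem_iff_getElem.mp (hmem u)
    obtain ⟨j, hj, rfl⟩ := List.mem_iff_getElem.mp (hmem v)
    exact (hreach i (by omega)).symm.trans (hreach j (by omega))
  · rw [hedges, finsum_mem_range hF, finsum_eq_sum_of_fintype, walkLength_eq_sum]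
    exact Fintype.sum_equiv (finCongr (by simp [hk])) _ _ fun i => by simp [F]

theorem mstLength_le_walkLength [DecidableEq α] (I : VRInstance α M) {μ : α → M}
    (hμ : ∀ x ∈ insert I.r I.P, μ x = I.μ₀ x) {l : List α}
    (hl : ∀ x ∈ insert I.r I.P, x ∈ l) :
    mstLength I ≤ walkLength (l.map μ) := by
  set s := insert I.r I.P
  set d := (l.filter (· ∈ s)).dedup
  have hsub : d.Sublist l := (List.dedup_sublist _).trans List.filter_sublist
  have hmem : ∀ x, x ∈ d ↔ x ∈ s := fun x => by simpa [d] using hl x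
  let d' : List s := d.attachWith (· ∈ s) fun x hx => (hmem x).mp hx
  have hval : d'.map Subtype.val = d := List.attachWith_map_subtype_val ..
  have hd' : d'.Nodup := List.Nodup.of_map Subtype.val (hval ▸ List.nodup_dedup _)
  have hmem' : ∀ x, x ∈ d' := fun x => by simp [d', hmem]
  obtain ⟨T, hT, hsum⟩ :=
    exists_isTree_finsum_edgeSet_eq_walkLength (fun x : s => I.μ₀ x) hd' hmem'
      (List.ne_nil_of_mem (hmem' ⟨I.r, Finset.mem_insert_self _ _⟩))
  have hbdd : BddBelow {x : ℝ | ∃ T : SimpleGraph s, T.IsTree ∧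
      x = ∑ᶠ e ∈ T.edgeSet,
        (Sym2.lift ⟨fun u v => dist (I.μ₀ u) (I.μ₀ v), fun _ _ => dist_comm _ _⟩ :
          Sym2 s → ℝ) e} :=
    ⟨0, by
      rintro _ ⟨T, -, rfl⟩
      exact finsum_nonneg fun e => finsum_nonneg fun _ => e.ind fun u v => dist_nonneg⟩
  calc mstLength I ≤ walkLength (d'.map fun x : s => I.μ₀ x) :=
        csInf_le hbdd ⟨T, hT, hsum.symm⟩
    _ = walkLength (d.map μ) := by
      rw [← hval, List.map_map]
      congr 1
      exact List.map_congr_left fun x _ => (hμ x x.2).symm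
    _ ≤ walkLength (l.map μ) := walkLength_le_of_sublist (hsub.map μ)

open Relation

abbrev ArcReach (U : Set (α × α)) : α → α → Prop := ReflTransGen fun u v => (u, v) ∈ U

structure IsArborescence (U : Set (α × α)) (root : α) : Prop where
  no_arc_into_root : ∀ u, (u, root) ∉ U
  eq_of_mem_of_mem : ∀ ⦃u u' v⦄, (u, v) ∈ U → (u', v) ∈ U → u = u'
  arcReach_fst : ∀ a ∈ U, ArcReach U root a.1

namespace IsArborescence

variable {U : Set (α × α)} {root : α}

theorem eq_root_of_arcReach (hU : IsArborescence U root) {v : α} (h : ArcReach U v root) :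
    v = root := by
  rcases h.cases_tail with h | ⟨u, -, hu⟩
  · exact h.symm
  · exact absurd hu (hU.no_arc_into_root u)

theorem exists_arc_from_root (hU : IsArborescence U root) (hne : U.Nonempty) :
    ∃ x, (root, x) ∈ U := by
  obtain ⟨a, ha⟩ := hne
  rcases (hU.arcReach_fst a ha).cases_head with h | ⟨x, hx, -⟩
  · exact ⟨a.2, h ▸ ha⟩
  · exact ⟨x, hx⟩

theorem of_subset_of_parent_mem {V : Set (α × α)} (hU : IsArborescence U root) (hVU : V ⊆ U)
    (hV : ∀ ⦃u v w⦄, (u, v) ∈ U → (v, w) ∈ V → (u, v) ∈ V) :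
    IsArborescence V root := by
  refine ⟨fun u hu => hU.no_arc_into_root u (hVU hu),
    fun u u' v hu hu' => hU.eq_of_mem_of_mem (hVU hu) (hVU hu'), fun a ha => ?_⟩
  suffices ∀ v, ArcReach U root v → ∀ w, (v, w) ∈ V → ArcReach V root v from this a.1
    (hU.arcReach_fst a (hVU ha)) a.2 ha
  intro v hv
  induction hv with
  | refl => exact fun _ _ => .refl
  | tail _ huv ih => exact fun w hvw => (ih _ (hV huv hvw)).tail (hV huv hvw)

theorem subtree (hU : IsArborescence U root) {x : α} (hx : (root, x) ∈ U) :
    IsArborescence {a ∈ U | ArcReach U x a.1} x := by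
  refine ⟨fun u hu => ?_, fun u u' v hu hu' => hU.eq_of_mem_of_mem hu.1 hu'.1, fun a ha => ?_⟩
  · obtain rfl := hU.eq_of_mem_of_mem hu.1 hx
    obtain rfl := hU.eq_root_of_arcReach hu.2
    exact hU.no_arc_into_root _ hx
  · suffices ∀ v, ArcReach U x v → ArcReach {a ∈ U | ArcReach U x a.1} x v from this _ ha.2
    intro v hv
    induction hv with
    | refl => exact .refl
    | tail hxu huv ih => exact ih.tail ⟨huv, hxu⟩

theorem not_transGen_self (hU : IsArborescence U root) {v : α} (hv : ArcReach U root v) :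
    ¬ TransGen (fun u v => (u, v) ∈ U) v v := by
  induction hv with
  | refl =>
    intro h
    obtain ⟨u, -, hu⟩ := TransGen.tail'_iff.mp h
    exact hU.no_arc_into_root u hu
  | @tail u v _ huv ih =>
    intro h
    obtain ⟨u', hvu', hu'v⟩ := TransGen.tail'_iff.mp h
    obtain rfl := hU.eq_of_mem_of_mem hu'v huv
    exact ih (TransGen.head' huv hvu')

theorem arcReach_antisymm (hU : IsArborescence U root) {u v : α} (hu : ArcReach U root u)
    (huv : ArcReach U u v) (hvu : ArcReach U v u) : u = v := by
  rcases huv.cases_head with h | ⟨w, huw, hwv⟩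
  · exact h
  · exact absurd (TransGen.head' huw (hwv.trans hvu)) (hU.not_transGen_self hu)

theorem arcReach_total_of_arcReach (hU : IsArborescence U root) {u u' v : α}
    (hu : ArcReach U u v) (hu' : ArcReach U u' v) : ArcReach U u u' ∨ ArcReach U u' u := by
  induction hu' with
  | refl => exact .inl hu
  | @tail w v hu'w hwv ih =>
    rcases hu.cases_tail with rfl | ⟨w', huw', hw'v⟩
    · exact .inr (hu'w.tail hwv)
    · exact ih (hU.eq_of_mem_of_mem hw'v hwv ▸ huw')

theorem exists_maximal_arcReach (hU : IsArborescence U root) {T : Set α} (hT : T.Finite)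
    (hTr : ∀ v ∈ T, ArcReach U root v) {v : α} (hv : v ∈ T) :
    ∃ q ∈ T, ArcReach U v q ∧ ∀ q' ∈ T, ArcReach U q q' → q' = q := by
  obtain ⟨q, ⟨hqT, hvq⟩, hmin⟩ := Set.exists_min_image {q ∈ T | ArcReach U v q}
    (fun q => {y ∈ T | ArcReach U q y}.ncard) (hT.subset fun _ h => h.1) ⟨v, hv, .refl⟩
  refine ⟨q, hqT, hvq, fun q' hq'T hqq' => by_contra fun hne => ?_⟩
  have hlt : {y ∈ T | ArcReach U q' y}.ncard < {y ∈ T | ArcReach U q y}.ncard :=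
    Set.ncard_lt_ncard ⟨fun y hy => ⟨hy.1, hqq'.trans hy.2⟩, fun hsub => hne
      (hU.arcReach_antisymm (hTr q hqT) hqq' (hsub ⟨hqT, .refl⟩).2).symm⟩
      (hT.subset fun _ h => h.1)
  exact (hmin q' ⟨hq'T, hvq.trans hqq'⟩).not_gt hlt

theorem exists_closed_walk (μ : α → M) {U : Finset (α × α)}
    (hU : IsArborescence ↑U root) :
    ∃ l : List α, l.head? = some root ∧ l.getLast? = some root ∧ (∀ a ∈ U, a.2 ∈ l) ∧
      walkLength (l.map μ) ≤ 2 * ∑ a ∈ U, dist (μ a.1) (μ a.2) := by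
  classical
  induction U using Finset.strongInduction generalizing root with
  | H U ih =>
  obtain rfl | hne := U.eq_empty_or_nonempty
  · exact ⟨[root], rfl, rfl, by simp, by simp⟩
  obtain ⟨x, hx⟩ := hU.exists_arc_from_root (by simpa using hne)
  -- the tour goes down the arc `(root, x)`, around the subtree below `x`, back up the arc,
  -- and then around the rest
  set below : α × α → Prop := fun a => ArcReach U x a.1
  have hx_below : ¬ below (root, x) := fun h =>
    hU.no_arc_into_root _ (hU.eq_root_of_arcReach h ▸ hx)
  set U₁ := U.filter below
  set U₂ := (U.filter (¬ below ·)).erase (root, x)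
  have hU₁ : IsArborescence ↑U₁ x := by simpa [U₁, Finset.coe_filter] using hU.subtree hx
  have hU₂ : IsArborescence ↑U₂ root := by
    refine hU.of_subset_of_parent_mem
      (fun a ha => (Finset.mem_filter.mp (Finset.mem_of_mem_erase ha)).1) ?_
    intro u v w huv hvw
    simp only [U₂, Finset.coe_erase, Finset.coe_filter, Set.mem_sdiff, Set.mem_ofPred_eq,
      Set.mem_singleton_iff, Prod.mk.injEq] at hvw ⊢
    refine ⟨⟨huv, fun h => hvw.1.2 (h.tail huv)⟩, fun h => hvw.1.2 (h.2 ▸ .refl)⟩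
  obtain ⟨l₁, hhead₁, hlast₁, hcov₁, hlen₁⟩ :=
    ih U₁ (Finset.filter_ssubset.mpr ⟨_, hx, hx_below⟩) hU₁
  obtain ⟨l₂, hhead₂, hlast₂, hcov₂, hlen₂⟩ :=
    ih U₂ ((Finset.erase_ssubset (Finset.mem_filter.mpr ⟨hx, hx_below⟩)).trans_le
      (Finset.filter_subset _ _)) hU₂
  refine ⟨root :: (l₁ ++ l₂), rfl,
    by simp [List.getLast?_cons, List.getLast?_append, hlast₂], ?_, ?_⟩
  · intro a ha
    have hx₁ : x ∈ l₁ := List.mem_of_mem_head? hhead₁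
    by_cases h₁ : below a
    · simp [hcov₁ a (Finset.mem_filter.mpr ⟨ha, h₁⟩)]
    by_cases h₂ : a = (root, x)
    · simp [h₂, hx₁]
    · simp [hcov₂ a (Finset.mem_erase.mpr ⟨h₂, Finset.mem_filter.mpr ⟨ha, h₁⟩⟩)]
  · have hsplit : ∑ a ∈ U, dist (μ a.1) (μ a.2)
        = ∑ a ∈ U₁, dist (μ a.1) (μ a.2)
          + (dist (μ root) (μ x) + ∑ a ∈ U₂, dist (μ a.1) (μ a.2)) := by
      rw [← Finset.sum_filter_add_sum_filter_not U below,
        ← Finset.add_sum_erase (U.filter (¬ below ·)) _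
          (Finset.mem_filter.mpr ⟨hx, hx_below⟩)]
    rw [List.map_cons, List.map_append,
      walkLength_cons (b := μ x) (by simp [List.head?_append, hhead₁]),
      walkLength_append (a := μ x) (b := μ root) (by simp [hlast₁]) (by simp [hhead₂]),
      dist_comm (μ x), hsplit]
    linarith

end IsArborescence

theorem Finset.sum_biUnion_le_sum_sum {ι γ β : Type*} [DecidableEq γ] [AddCommMonoid β]
    [PartialOrder β] [IsOrderedAddMonoid β] {f : γ → β} (hf : ∀ x, 0 ≤ f x)
    (s : Finset ι) (t : ι → Finset γ) :
    ∑ x ∈ s.biUnion t, f x ≤ ∑ i ∈ s, ∑ x ∈ t i, f x := by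
  rw [← Finset.sup_eq_biUnion]
  refine s.apply_sup_le_sum (f := fun u => ∑ x ∈ u, f x) (by simp) fun {u v} => ?_
  rw [Finset.sup_eq_union, ← Finset.sum_union_inter]
  exact le_add_of_nonneg_right (Finset.sum_nonneg fun x _ => hf x)

namespace Schedule

variable {I : VRInstance α M} (S : Schedule I)

theorem finite_A_s11 : S.A.Finite :=
  (S.finite_W.prod S.finite_W).subset fun a ha => S.arcs_subset a ha

theorem isArborescence : IsArborescence S.A I.r where
  no_arc_into_root := S.no_arc_into_root
  eq_of_mem_of_mem u u' v hu hu' := by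
    obtain ⟨_, -, huniq⟩ := S.unique_in_arc v (S.arcs_subset _ hu).2
      fun h => S.no_arc_into_root u (h ▸ hu)
    exact (huniq u hu).trans (huniq u' hu').symm
  arcReach_fst a ha := S.reachable a.1 (S.arcs_subset a ha).1

theorem mem_pathSet_of_reach {v y : α} (hv : v ∈ S.W) (h : S.reach v y) : v ∈ S.pathSet y :=
  ⟨hv, S.reachable v hv, h⟩

theorem mem_pathArcs_of_reach {a : α × α} {y : α} (ha : a ∈ S.A) (h : S.reach a.2 y) :
    a ∈ S.pathArcs y :=
  ⟨ha, S.mem_pathSet_of_reach (S.arcs_subset a ha).1 (.head ha h),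
    S.mem_pathSet_of_reach (S.arcs_subset a ha).2 h⟩

theorem finite_pathArcs_s11 (y : α) : (S.pathArcs y).Finite :=
  S.finite_A_s11.subset fun _ h => h.1

def itemArcs : Set (α × α) := {a ∈ S.A | ∃ p ∈ I.P, S.reach a.2 p}

theorem finite_itemArcs : S.itemArcs.Finite :=
  S.finite_A_s11.subset fun _ h => h.1

theorem isArborescence_itemArcs : IsArborescence S.itemArcs I.r :=
  S.isArborescence.of_subset_of_parent_mem (fun _ h => h.1) fun _ _ _ huv ⟨hvw, p, hp, hwp⟩ =>
    ⟨huv, p, hp, .head hvw hwp⟩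

theorem exists_mem_itemArcs_snd_eq {p : α} (hp : p ∈ I.P) : ∃ a ∈ S.itemArcs, a.2 = p := by
  rcases (S.reachable p (S.items_subset hp)).cases_tail with h | ⟨u, -, hup⟩
  · exact absurd (h ▸ hp) I.r_not_item
  · exact ⟨(u, p), ⟨hup, p, hp, .refl⟩, rfl⟩

theorem mstLength_le_two_mul_finsum_itemArcs [DecidableEq α] :
    mstLength I ≤ 2 * ∑ᶠ a ∈ S.itemArcs, dist (S.μ a.1) (S.μ a.2) := by
  obtain ⟨l, hhead, -, hcov, hlen⟩ := IsArborescence.exists_closed_walk S.μ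
    (U := S.finite_itemArcs.toFinset) (by simpa using S.isArborescence_itemArcs)
  rw [finsum_mem_eq_finite_toFinset_sum _ S.finite_itemArcs]
  refine (mstLength_le_walkLength I (fun x hx => S.μ_placement x (by simpa using hx))
    fun x hx => ?_).trans hlen
  rcases Finset.mem_insert.mp hx with rfl | hp
  · exact List.mem_of_mem_head? hhead
  · obtain ⟨a, ha, rfl⟩ := S.exists_mem_itemArcs_snd_eq hp
    exact hcov a (S.finite_itemArcs.mem_toFinset.mpr ha)

theorem finsum_itemArcs_le_length :
    ∑ᶠ a ∈ S.itemArcs, dist (S.μ a.1) (S.μ a.2) ≤ S.length := by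
  rw [length, finsum_mem_eq_finite_toFinset_sum _ S.finite_itemArcs,
    finsum_mem_eq_finite_toFinset_sum _ S.finite_A_s11]
  exact Finset.sum_le_sum_of_subset_of_nonneg
    (Set.Finite.toFinset_subset_toFinset.mpr fun _ h => h.1) fun _ _ _ => dist_nonneg

open Classical in
noncomputable def maxItems : Finset α := I.P.filter fun q => ∀ p ∈ I.P, S.reach q p → p = q

theorem mem_maxItems {q : α} :
    q ∈ S.maxItems ↔ q ∈ I.P ∧ ∀ p ∈ I.P, S.reach q p → p = q := by
  classical
  exact Finset.mem_filter

theorem exists_mem_maxItems_reach {p : α} (hp : p ∈ I.P) :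
    ∃ q ∈ S.maxItems, S.reach p q := by
  obtain ⟨q, hq, hpq, hmax⟩ := S.isArborescence.exists_maximal_arcReach I.P.finite_toSet
    (fun v hv => S.reachable v (S.items_subset hv)) hp
  exact ⟨q, S.mem_maxItems.mpr ⟨hq, hmax⟩, hpq⟩

theorem exists_mem_leaves_reach {v : α} (hv : v ∈ S.W) : ∃ x ∈ S.leaves, S.reach v x := by
  obtain ⟨x, hxW, hvx, hmax⟩ :=
    S.isArborescence.exists_maximal_arcReach S.finite_W S.reachable hv
  refine ⟨x, ⟨hxW, ?_⟩, hvx⟩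
  suffices {y | (x, y) ∈ S.A} = ∅ by rw [outDeg, this, Set.ncard_empty]
  refine Set.eq_empty_of_forall_notMem fun y hxy => ?_
  obtain rfl := hmax y (S.arcs_subset _ hxy).2 (.single hxy)
  exact S.isArborescence.not_transGen_self (S.reachable y hxW) (.single hxy)

theorem card_maxItems_le_ncard_leaves : S.maxItems.card ≤ S.leaves.ncard := by
  have h : ∀ q ∈ S.maxItems, ∃ x ∈ S.leaves, S.reach q x := fun q hq =>
    S.exists_mem_leaves_reach (S.items_subset (S.mem_maxItems.mp hq).1)
  choose! leaf hleaf hreach using h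
  rw [← Set.ncard_coe_finset]
  refine Set.ncard_le_ncard_of_injOn leaf hleaf (fun q hq q' hq' heq => ?_)
    (S.finite_W.subset fun _ h => h.1)
  obtain ⟨hqP, hqmax⟩ := S.mem_maxItems.mp hq
  obtain ⟨hq'P, hq'max⟩ := S.mem_maxItems.mp hq'
  rcases S.isArborescence.arcReach_total_of_arcReach (hreach q hq) (heq ▸ hreach q' hq')
    with h | h
  · exact (hqmax q' hq'P h).symm
  · exact hq'max q hqP h

theorem finsum_itemArcs_le_sum_maxItems :
    ∑ᶠ a ∈ S.itemArcs, dist (S.μ a.1) (S.μ a.2)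
      ≤ ∑ q ∈ S.maxItems, ∑ᶠ a ∈ S.pathArcs q, dist (S.μ a.1) (S.μ a.2) := by
  classical
  rw [Finset.sum_congr rfl fun q _ => finsum_mem_eq_finite_toFinset_sum _ (S.finite_pathArcs_s11 q),
    finsum_mem_eq_finite_toFinset_sum _ S.finite_itemArcs]
  refine (Finset.sum_le_sum_of_subset_of_nonneg (fun a ha => ?_) fun _ _ _ => dist_nonneg).trans
    (Finset.sum_biUnion_le_sum_sum (fun _ => dist_nonneg) _ _)
  obtain ⟨haA, p, hp, hap⟩ := S.finite_itemArcs.mem_toFinset.mp ha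
  obtain ⟨q, hq, hpq⟩ := S.exists_mem_maxItems_reach hp
  exact Finset.mem_biUnion.mpr ⟨q, hq,
    (S.finite_pathArcs_s11 q).mem_toFinset.mpr (S.mem_pathArcs_of_reach haA (hap.trans hpq))⟩

theorem card_le_sum_maxItems :
    I.P.card ≤ ∑ q ∈ S.maxItems, ((↑I.P : Set α) ∩ S.pathSet q).ncard := by
  rw [← Set.ncard_coe_finset]
  refine (Set.ncard_le_ncard (fun p hp => ?_) ?_).trans (Finset.set_ncard_biUnion_le _ _)
  · obtain ⟨q, hq, hpq⟩ := S.exists_mem_maxItems_reach hp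
    exact Set.mem_biUnion hq ⟨hp, S.mem_pathSet_of_reach (S.items_subset hp) hpq⟩
  · exact S.maxItems.finite_toSet.biUnion fun q _ => I.P.finite_toSet.inter_of_left _

theorem finsum_pathArcs_add_delivery_le_delayTo (y : α) :
    ∑ᶠ a ∈ S.pathArcs y, dist (S.μ a.1) (S.μ a.2)
      + I.δ * ((↑I.P : Set α) ∩ S.pathSet y).ncard ≤ S.delayTo y :=
  le_add_of_nonneg_right (finsum_nonneg fun _ => finsum_nonneg fun _ => Nat.cast_nonneg _)

theorem delayTo_le_of_feasible (hS : S.Feasible) {p : α} (hp : p ∈ I.P) : S.delayTo p ≤ I.Δ :=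
  (Finset.le_sup' (fun p => S.delayTo p) hp).trans hS

theorem finsum_itemArcs_add_card_mul_le (hS : S.Feasible) :
    ∑ᶠ a ∈ S.itemArcs, dist (S.μ a.1) (S.μ a.2) + I.P.card * I.δ
      ≤ S.maxItems.card * I.Δ := by
  have hδ : 0 ≤ I.δ := zero_le_one.trans I.one_le_δ
  calc _ ≤ ∑ q ∈ S.maxItems, ∑ᶠ a ∈ S.pathArcs q, dist (S.μ a.1) (S.μ a.2)
          + I.δ * ∑ q ∈ S.maxItems, (((↑I.P : Set α) ∩ S.pathSet q).ncard : ℝ) := by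
        rw [mul_comm]
        gcongr
        · exact S.finsum_itemArcs_le_sum_maxItems
        · exact_mod_cast S.card_le_sum_maxItems
    _ = ∑ q ∈ S.maxItems, (∑ᶠ a ∈ S.pathArcs q, dist (S.μ a.1) (S.μ a.2)
          + I.δ * ((↑I.P : Set α) ∩ S.pathSet q).ncard) := by
        rw [Finset.mul_sum, Finset.sum_add_distrib]
    _ ≤ ∑ _q ∈ S.maxItems, I.Δ := Finset.sum_le_sum fun q hq =>
        (S.finsum_pathArcs_add_delivery_le_delayTo q).trans
          (S.delayTo_le_of_feasible hS (S.mem_maxItems.mp hq).1)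
    _ = S.maxItems.card * I.Δ := by rw [Finset.sum_const, nsmul_eq_mul]

end Schedule

/-- **Lower bound.** Every feasible schedule has length at least `MST/2` and
uses at least `(MST/2 + n·δ)/Δ` vehicles. -/
theorem feasible_schedule_lower_bound [DecidableEq α] (I : VRInstance α M)
    (S : Schedule I) (hS : S.Feasible) :
    mstLength I / 2 ≤ S.length ∧
    (mstLength I / 2 + I.P.card * I.δ) / I.Δ ≤ (S.leaves.ncard : ℝ) := by
  have hmst := S.mstLength_le_two_mul_finsum_itemArcs
  refine ⟨by linarith [S.finsum_itemArcs_le_length], ?_⟩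
  rw [div_le_iff₀ I.Δ_pos]
  calc mstLength I / 2 + I.P.card * I.δ ≤ S.maxItems.card * I.Δ := by
        linarith [S.finsum_itemArcs_add_card_mul_le hS]
    _ ≤ S.leaves.ncard * I.Δ := by
        gcongr
        · exact I.Δ_pos.le
        · exact_mod_cast S.card_maxItems_le_ncard_leaves
end

section
/- Tightness of the shallow-light tradeoff: For every ε > 0 and every α with 1 ≤ α < 1 + 1/ε, there exist a finite connected simple undirected graph G = (V,E) with positive edge weights c : E → ℝ_{>0} and a vertex r ∈ V such that dist_{(G,c)}(r,v) ≤ 1 for every v ∈ V, and every spanning tree F of G in which the unique path in F from r to each vertex has total weight at most 1 + ε satisfies: the total weight of F is strictly greater than α · MST(G,c). -/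
/-- The total weight of a walk: the sum of the weights of its edges. -/
noncomputable def walkWeight {V : Type*} {G : SimpleGraph V} (c : Sym2 V → ℝ)
    {u v : V} (p : G.Walk u v) : ℝ :=
  (p.edges.map c).sum

/-- The weighted distance in `(G,c)`: the infimum of the total weights of
`u`–`v` walks. -/
noncomputable def wdist {V : Type*} (G : SimpleGraph V) (c : Sym2 V → ℝ)
    (u v : V) : ℝ :=
  sInf {x : ℝ | ∃ p : G.Walk u v, x = walkWeight c p}

/-- The total weight of (the edges of) a graph. -/
noncomputable def totalWeight {V : Type*} (F : SimpleGraph V) (c : Sym2 V → ℝ) : ℝ :=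
  ∑ᶠ e ∈ F.edgeSet, c e

/-- `MST(G,c)`: the minimum total weight of a spanning tree of `G`. -/
noncomputable def mstWeight {V : Type*} (G : SimpleGraph V) (c : Sym2 V → ℝ) : ℝ :=
  sInf {x : ℝ | ∃ T : SimpleGraph V, T ≤ G ∧ T.IsTree ∧ x = totalWeight T c}

/-!
Take the cone over a spider: an apex `r = none` is joined by spokes of weight `1` to the centre and to
every vertex of `m` legs, each a path of `K + 1` vertices with edges of weight `δ = ε / K`. A
spanning tree in which `r` has degree `d` weighs `|W| δ + d (1 - δ)`, so one spoke gives
`MST ≤ 1 + m (K + 1) δ`. In a tree of depth at most `1 + ε` the path from `r` to the tip of a leg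
must leave `r` by a spoke into that very leg, since otherwise the potential `1 + δ · (height in
the leg)` puts the tip at depth at least `1 + (K + 1) δ > 1 + ε`. Hence such a tree has at least
`m` spokes and weighs more than `m (1 + ε)`, and the ratio `m (1 + ε) / (1 + m (ε + δ))` tends to
`1 + 1 / ε` as `m, K → ∞`.
-/

open Finset

namespace SimpleGraph

variable {V W : Type*}

section Weights

variable {G : SimpleGraph V} (c : Sym2 V → ℝ)

lemma walkWeight_nil {u : V} : walkWeight c (Walk.nil : G.Walk u u) = 0 := rfl

lemma walkWeight_cons {u v w : V} (h : G.Adj u v) (p : G.Walk v w) :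
    walkWeight c (Walk.cons h p) = c s(u, v) + walkWeight c p := by
  simp [walkWeight]

lemma walkWeight_nonneg (hc : ∀ e, 0 ≤ c e) {u v : V} (p : G.Walk u v) :
    0 ≤ walkWeight c p :=
  List.sum_nonneg (by simpa using fun e _ => hc e)

lemma wdist_le_walkWeight (hc : ∀ e, 0 ≤ c e) {u v : V} (p : G.Walk u v) :
    wdist G c u v ≤ walkWeight c p :=
  csInf_le ⟨0, by rintro _ ⟨q, rfl⟩; exact walkWeight_nonneg c hc q⟩ ⟨p, rfl⟩

lemma sub_le_walkWeight (ψ : V → ℝ) (hψ : ∀ x y, G.Adj x y → ψ y - ψ x ≤ c s(x, y))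
    {u v : V} (p : G.Walk u v) : ψ v - ψ u ≤ walkWeight c p := by
  induction p with
  | nil => simp [walkWeight_nil]
  | cons h p ih => rw [walkWeight_cons]; linarith [hψ _ _ h]

lemma totalWeight_eq_sum (F : SimpleGraph V) [Fintype F.edgeSet] :
    totalWeight F c = ∑ e ∈ F.edgeFinset, c e := by
  rw [totalWeight, ← coe_edgeFinset, finsum_mem_coe_finset]

end Weights

def cone (H : SimpleGraph W) : SimpleGraph (Option W) where
  Adj
    | none, none => False
    | none, some _ => True
    | some _, none => True
    | some a, some b => H.Adj a b
  symm := ⟨by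
    rintro (_ | a) (_ | b) h
    exacts [h, h, h, h.symm]⟩
  loopless := ⟨by
    rintro (_ | a) h
    exacts [h, h.ne rfl]⟩

lemma cone_adj_none {H : SimpleGraph W} (a : W) : (cone H).Adj none (some a) := trivial

lemma cone_connected (H : SimpleGraph W) : (cone H).Connected := by
  have hreach : ∀ x, (cone H).Reachable none x := by
    rintro (_ | a)
    exacts [Reachable.refl _, (cone_adj_none a).reachable]
  exact Connected.mk fun x y => (hreach x).symm.trans (hreach y)

def coneWeight [DecidableEq W] (δ : ℝ) (e : Sym2 (Option W)) : ℝ := if none ∈ e then 1 else δ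

section ConeWeight

variable [DecidableEq W] {H : SimpleGraph W} {δ : ℝ}

lemma coneWeight_none (x : Option W) : coneWeight δ s(none, x) = 1 :=
  if_pos (Sym2.mem_mk_left _ _)

lemma coneWeight_some (a b : W) : coneWeight δ s(some a, some b) = δ :=
  if_neg (by simp)

lemma coneWeight_pos (hδ : 0 < δ) (e : Sym2 (Option W)) : 0 < coneWeight δ e := by
  unfold coneWeight
  split_ifs
  exacts [one_pos, hδ]

lemma coneWeight_nonneg (hδ : 0 ≤ δ) (e : Sym2 (Option W)) : 0 ≤ coneWeight δ e := by
  unfold coneWeight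
  split_ifs
  exacts [zero_le_one, hδ]

lemma wdist_cone_none_le_one (hδ : 0 ≤ δ) (x : Option W) :
    wdist (cone H) (coneWeight δ) none x ≤ 1 := by
  cases x with
  | none =>
    exact (wdist_le_walkWeight _ (coneWeight_nonneg hδ) Walk.nil).trans (by simp [walkWeight_nil])
  | some a =>
    refine (wdist_le_walkWeight _ (coneWeight_nonneg hδ)
      (Walk.cons (cone_adj_none a) Walk.nil)).trans ?_
    simp [walkWeight_cons, walkWeight_nil, coneWeight_none]

/-- A tree on `Option W` has `|W|` edges, of which exactly `T.degree none` are spokes. -/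
lemma IsTree.totalWeight_coneWeight [Fintype W] {T : SimpleGraph (Option W)}
    [DecidableRel T.Adj] (hT : T.IsTree) (δ : ℝ) :
    totalWeight T (coneWeight δ) = Fintype.card W * δ + T.degree none * (1 - δ) := by
  have hcard := hT.card_edgeFinset
  rw [Fintype.card_option, Nat.add_right_cancel_iff] at hcard
  have hsplit := card_filter_add_card_filter_not (s := T.edgeFinset) (none ∈ ·)
  rw [← incidenceFinset_eq_filter, card_incidenceFinset_eq_degree, hcard] at hsplit
  unfold coneWeight
  rw [totalWeight_eq_sum, sum_ite, sum_const, sum_const, ← incidenceFinset_eq_filter,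
    card_incidenceFinset_eq_degree, nsmul_eq_mul, nsmul_eq_mul, ← hsplit]
  push_cast
  ring

lemma mstWeight_cone_le [Fintype W] (hH : H.Connected) (hδ0 : 0 ≤ δ) (hδ1 : δ ≤ 1) :
    mstWeight (cone H) (coneWeight δ) ≤ Fintype.card W * δ + (1 - δ) := by
  classical
  obtain ⟨w⟩ := hH.nonempty
  -- `G'` is connected and has a single spoke, so its spanning trees have at most one
  set G' := H.map Function.Embedding.some ⊔ edge none (some w)
  have hG'le : G' ≤ cone H := by
    rintro x y (hxy | hxy)
    · obtain ⟨a, b, hab, rfl, rfl⟩ := (map_adj _ _ _ _).1 hxy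
      exact hab
    · obtain ⟨⟨rfl, rfl⟩ | ⟨rfl, rfl⟩, -⟩ := (edge_adj _ _ _ _).1 hxy
      exacts [cone_adj_none w, (cone_adj_none w).symm]
  have hG' : G'.Connected := by
    let f : H →g G' := ⟨some, fun hab => Or.inl ((map_adj _ _ _ _).2 ⟨_, _, hab, rfl, rfl⟩)⟩
    have hw : G'.Adj none (some w) := Or.inr ((edge_adj _ _ _ _).2 ⟨Or.inl ⟨rfl, rfl⟩, by simp⟩)
    have hreach : ∀ x, G'.Reachable none x := by
      rintro (_ | a)
      exacts [Reachable.refl _, hw.reachable.trans ((hH.preconnected w a).map f)]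
    exact Connected.mk fun x y => (hreach x).symm.trans (hreach y)
  obtain ⟨T, hTG', hT⟩ := hG'.exists_isTree_le
  have hneighbor : ∀ z ∈ T.neighborFinset none, z = some w := by
    intro z hz
    rcases hTG' ((mem_neighborFinset _ _ _).1 hz) with hz | hz
    · obtain ⟨a, b, -, ha, -⟩ := (map_adj _ _ _ _).1 hz
      simp at ha
    · exact ((edge_adj _ _ _ _).1 hz).1.elim (·.2) fun h => absurd h.1 (by simp)
  have hdeg : (T.degree none : ℝ) ≤ 1 := by
    rw [← card_neighborFinset_eq_degree]
    exact_mod_cast Finset.card_le_one.2 fun x hx y hy => by rw [hneighbor x hx, hneighbor y hy]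
  have hmem : totalWeight T (coneWeight δ) ∈
      {x | ∃ T', T' ≤ cone H ∧ T'.IsTree ∧ x = totalWeight T' (coneWeight δ)} :=
    ⟨T, hTG'.trans hG'le, hT, rfl⟩
  refine (csInf_le ⟨0, ?_⟩ hmem).trans ?_
  · rintro _ ⟨T', -, hT', rfl⟩
    rw [hT'.totalWeight_coneWeight]
    have : 0 ≤ 1 - δ := by linarith
    positivity
  · rw [hT.totalWeight_coneWeight]
    nlinarith

lemma one_add_le_walkWeight_cone {F : SimpleGraph (Option W)} (hF : F ≤ cone H) (h : W → ℝ)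
    (h_nonneg : ∀ a, 0 ≤ h a) (h_adj : ∀ a b, H.Adj a b → h b - h a ≤ δ)
    (h_root : ∀ a, F.Adj none (some a) → h a ≤ 0) {w : W} (p : F.Walk none (some w)) :
    1 + h w ≤ walkWeight (coneWeight δ) p := by
  have := sub_le_walkWeight (coneWeight δ) (fun x => x.elim 0 (1 + h ·)) ?_ p
  · simpa using this
  rintro (_ | a) (_ | b) hxy
  · exact (hxy.ne rfl).elim
  · simp [coneWeight_none, h_root b hxy]
  · rw [Sym2.eq_swap, coneWeight_none]
    simp only [Option.elim_none, Option.elim_some]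
    linarith [h_nonneg a]
  · simpa [coneWeight_some] using h_adj a b (hF hxy)

end ConeWeight

def spider (m n : ℕ) : SimpleGraph (Option (Fin m × Fin n)) where
  Adj
    | none, none => False
    | none, some (_, i) => i.val = 0
    | some (_, i), none => i.val = 0
    | some (s, i), some (t, j) => s = t ∧ (pathGraph n).Adj i j
  symm := ⟨by
    rintro (_ | ⟨s, i⟩) (_ | ⟨t, j⟩) h
    exacts [h, h, h, ⟨h.1.symm, h.2.symm⟩]⟩
  loopless := ⟨by
    rintro (_ | ⟨s, i⟩) h
    exacts [h, h.2.ne rfl]⟩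

lemma spider_connected (m n : ℕ) : (spider m n).Connected := by
  have hreach : ∀ x, (spider m n).Reachable none x := by
    rintro (_ | ⟨t, i⟩)
    · rfl
    · let leg : pathGraph n →g spider m n := ⟨fun j => some (t, j), fun h => ⟨rfl, h⟩⟩
      have hroot : (spider m n).Adj none (leg ⟨0, i.pos⟩) := rfl
      exact hroot.reachable.trans ((pathGraph_preconnected n _ i).map leg)
  exact Connected.mk fun x y => (hreach x).symm.trans (hreach y)

variable {m n : ℕ}

def legHeight (t : Fin m) : Option (Fin m × Fin n) → ℕ
  | none => 0
  | some (s, i) => if s = t then i + 1 else 0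

lemma legHeight_le_succ_of_adj (t : Fin m) {x y : Option (Fin m × Fin n)}
    (h : (spider m n).Adj x y) : legHeight t y ≤ legHeight t x + 1 := by
  rcases x with _ | ⟨s, i⟩ <;> rcases y with _ | ⟨s', j⟩
  · exact h.elim
  · change (j : ℕ) = 0 at h
    simp only [legHeight]
    split_ifs <;> omega
  · simp [legHeight]
  · obtain ⟨rfl, hij⟩ := h
    rw [pathGraph_adj] at hij
    simp only [legHeight]
    split_ifs <;> omega

lemma exists_cone_adj_leg_of_walkWeight_lt {δ : ℝ} (hδ : 0 ≤ δ)
    {F : SimpleGraph (Option (Option (Fin m × Fin n)))} (hF : F ≤ cone (spider m n))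
    {t : Fin m} {i : Fin n} (p : F.Walk none (some (some (t, i))))
    (hp : walkWeight (coneWeight δ) p < 1 + (i + 1) * δ) :
    ∃ j, F.Adj none (some (some (t, j))) := by
  by_contra! hno
  have := one_add_le_walkWeight_cone (δ := δ) hF (fun x => δ * legHeight t x)
    (fun _ => by positivity) ?_ ?_ p
  · simp only [legHeight] at this
    push_cast at this
    linarith
  · intro a b hab
    have : (legHeight t b : ℝ) ≤ legHeight t a + 1 := by
      exact_mod_cast legHeight_le_succ_of_adj t hab
    nlinarith
  · rintro (_ | ⟨s, j⟩) hadj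
    · simp [legHeight]
    · obtain rfl | hs := eq_or_ne s t
      · exact (hno j hadj).elim
      · simp [legHeight, hs]

lemma card_le_degree_none {ε δ : ℝ} {K : ℕ} (hδ : 0 ≤ δ) (hεδ : ε < (K + 1) * δ)
    {F : SimpleGraph (Option (Option (Fin m × Fin (K + 1))))} [DecidableRel F.Adj]
    (hF : F ≤ cone (spider m (K + 1))) (hconn : F.Connected)
    (hlight : ∀ v (p : F.Walk none v), p.IsPath → walkWeight (coneWeight δ) p ≤ 1 + ε) :
    m ≤ F.degree none := by
  have hspoke : ∀ t : Fin m, ∃ j, F.Adj none (some (some (t, j))) := by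
    intro t
    obtain ⟨p⟩ := hconn.preconnected none (some (some (t, Fin.last K)))
    refine exists_cone_adj_leg_of_walkWeight_lt hδ hF p.bypass ?_
    have := hlight _ _ p.bypass_isPath
    simp only [Fin.val_last]
    linarith
  choose j hj using hspoke
  rw [← card_neighborFinset_eq_degree]
  simpa only [card_univ, Fintype.card_fin] using
    Finset.card_le_card_of_injOn (s := univ) (fun t => some (some (t, j t)))
      (fun t _ => by simpa using hj t) (fun s _ t _ h => by simp at h; exact h.1)

end SimpleGraph

open SimpleGraph

/-- With `δ = ε / K`, the left side is `a` times the MST bound of the cone over `spider m (K + 1)`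
and the right side bounds the weight of every tree of depth at most `1 + ε`. -/
lemma exists_spider_dims_lt {a ε : ℝ} (hε : 0 < ε) (ha : a * ε < 1 + ε) :
    ∃ K m : ℕ, ε ≤ K ∧ a * (m * (K + 1) * (ε / K) + 1) < m * (1 + ε) := by
  set g := 1 + ε - a * ε
  have hg : 0 < g := by linarith
  obtain ⟨K, hK⟩ := exists_nat_gt (max ε (2 * a * ε / g))
  obtain ⟨m, hm⟩ := exists_nat_gt (2 * a / g)
  have hKε : ε < K := (le_max_left _ _).trans_lt hK
  have hK0 : (0 : ℝ) < K := hε.trans hKε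
  have hδ : a * ε / K < g / 2 := by
    rw [div_lt_iff₀ hK0]
    have := (le_max_right _ _).trans_lt hK
    rw [div_lt_iff₀ hg] at this
    linarith
  have hm' : a < m * g / 2 := by
    rw [div_lt_iff₀ hg] at hm
    linarith
  refine ⟨K, m, hKε.le, ?_⟩
  have hexpand : a * (m * (K + 1) * (ε / K) + 1) = a * m * ε + m * (a * ε / K) + a := by
    field_simp
  have hmδ : m * (a * ε / K) ≤ m * (g / 2) := by gcongr
  rw [hexpand]
  linarith

/-- **Tightness of the shallow-light tradeoff.** For every `ε > 0` and every
`α` with `1 ≤ α < 1 + 1/ε`, there exist a finite connected simple undirected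
graph `G = (V,E)` with positive edge weights `c` and a vertex `r ∈ V` such that
`dist_{(G,c)}(r,v) ≤ 1` for every `v ∈ V`, and every spanning tree `F` of `G`
in which the unique path in `F` from `r` to each vertex has total weight at
most `1 + ε` has total weight strictly greater than `α · MST(G,c)`. -/
theorem shallow_light_tight (ε : ℝ) (hε : 0 < ε)
    (a : ℝ) (ha1 : 1 ≤ a) (ha2 : a < 1 + 1 / ε) :
    ∃ (V : Type) (_ : Fintype V) (G : SimpleGraph V) (c : Sym2 V → ℝ) (r : V),
      G.Connected ∧
      (∀ e ∈ G.edgeSet, 0 < c e) ∧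
      (∀ v : V, wdist G c r v ≤ 1) ∧
      ∀ F : SimpleGraph V, F ≤ G → F.IsTree →
        (∀ (v : V) (p : F.Walk r v), p.IsPath → walkWeight c p ≤ 1 + ε) →
        a * mstWeight G c < totalWeight F c := by
  have haε : a * ε < 1 + ε := by
    have := mul_lt_mul_of_pos_right ha2 hε
    rwa [add_mul, one_div, inv_mul_cancel₀ hε.ne', one_mul, add_comm] at this
  obtain ⟨K, m, hKε, hparams⟩ := exists_spider_dims_lt hε haε
  have hK : (0 : ℝ) < K := hε.trans_le hKε
  set δ := ε / K
  have hδ0 : 0 < δ := div_pos hε hK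
  have hδ1 : δ ≤ 1 := (div_le_one hK).2 hKε
  have hKδ : K * δ = ε := mul_div_cancel₀ _ hK.ne'
  refine ⟨_, inferInstance, cone (spider m (K + 1)), coneWeight δ, none, cone_connected _,
    fun e _ => coneWeight_pos hδ0 e, wdist_cone_none_le_one hδ0.le, ?_⟩
  intro F hFG hF hlight
  classical
  have hmst := mstWeight_cone_le (spider_connected m (K + 1)) hδ0.le hδ1
  have hdeg : (m : ℝ) ≤ F.degree none := by
    exact_mod_cast card_le_degree_none hδ0.le (by linarith) hFG hF.connected hlight
  rw [hF.totalWeight_coneWeight]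
  simp only [Fintype.card_option, Fintype.card_prod, Fintype.card_fin] at hmst ⊢
  push_cast at hmst ⊢
  calc a * mstWeight _ _ ≤ a * ((m * (K + 1) + 1) * δ + (1 - δ)) := by gcongr
    _ = a * (m * (K + 1) * δ + 1) := by ring
    _ < m * (1 + K * δ) + δ := by rw [hKδ]; linarith
    _ = (m * (K + 1) + 1) * δ + m * (1 - δ) := by ring
    _ ≤ (m * (K + 1) + 1) * δ + F.degree none * (1 - δ) := by gcongr
end
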